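/- arXiv:1903.08723 — 9 statements merged into one kernel-verified Lean document; each statement's English description precedes it below -/
import Mathlib

section
/- If I is a G-indexing system, then the relation K →_I H (defined by K ⊆ H and H/K ∈ I(H)) is a partial order on the set of subgroups of G that refines the subset relation. -/
open Pointwise

/-- Conjugate of a subgroup: `conjS g H = g H g⁻¹`. -/
def conjS {G : Type} [Group G] (g : G) (H : Subgroup G) : Subgroup G :=
  MulAut.conj g • H

/-- The trivial action of a group on a type. -/
def trivialSMul (H : Type) [Group H] (X : Type) : MulAction H X where
  smul := fun _ x => x
  one_smul := fun _ => rfl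
  mul_smul := fun _ _ _ => rfl

/-- Application of an explicitly given action. -/
def actSMul {H X : Type} [Group H] (a : MulAction H X) (h : H) (x : X) : X :=
  letI := a; h • x

/-- Restriction of an action along a group homomorphism. -/
def resAction {K H : Type} [Group K] [Group H] (φ : K →* H) (X : Type)
    (a : MulAction H X) : MulAction K X :=
  letI := a; MulAction.compHom X φ

/-- The disjoint union of two actions. -/
def sumAction {H X Y : Type} [Group H] (aX : MulAction H X) (aY : MulAction H Y) :
    MulAction H (X ⊕ Y) :=
  letI := aX; letI := aY
  { smul := fun h p => Sum.map (fun x => h • x) (fun y => h • y) p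
    one_smul := by rintro (x | y) <;> simp
    mul_smul := by rintro h h' (x | y) <;> simp [mul_smul] }

/-- A map is equivariant for two explicitly given actions. -/
def IsEquivariant {H X Y : Type} [Group H] (aX : MulAction H X)
    (aY : MulAction H Y) (f : X → Y) : Prop :=
  ∀ (h : H) (x : X), f (actSMul aX h x) = actSMul aY h (f x)

/-- The setoid on `H × X` whose quotient is the induced `H`-set
`ind_K^H X = H ×_K X` of a `K`-set `X` along `K ≤ H`. -/
def indSetoid (H : Type) [Group H] (K : Subgroup H) (X : Type)
    (a : MulAction K X) : Setoid (H × X) :=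
  letI := a
  { r := fun p q => ∃ k : K, p.1 * k = q.1 ∧ k • q.2 = p.2
    iseqv := by
      constructor
      · exact fun p => ⟨1, by simp, by simp⟩
      · rintro p q ⟨k, hk1, hk2⟩
        refine ⟨k⁻¹, ?_, ?_⟩
        · rw [← hk1]; simp [mul_assoc]
        · rw [← hk2]; simp
      · rintro p q r ⟨k, hk1, hk2⟩ ⟨l, hl1, hl2⟩
        refine ⟨k * l, ?_, ?_⟩
        · rw [← hl1, ← hk1]; simp [mul_assoc]
        · rw [← hk2, ← hl2]; simp [mul_smul] }

/-- The underlying set of the induced `H`-set `ind_K^H X`. -/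
def IndType (H : Type) [Group H] (K : Subgroup H) (X : Type)
    (a : MulAction K X) : Type :=
  Quotient (indSetoid H K X a)

instance (H : Type) [Group H] [Finite H] (K : Subgroup H) (X : Type)
    [Finite X] (a : MulAction K X) : Finite (IndType H K X a) :=
  Quotient.finite _

/-- The `H`-action on the induced `H`-set `ind_K^H X`. -/
def indAction (H : Type) [Group H] (K : Subgroup H) (X : Type)
    (a : MulAction K X) : MulAction H (IndType H K X a) where
  smul h := Quotient.map (fun p => (h * p.1, p.2))
    (by rintro p q ⟨k, hk1, hk2⟩; exact ⟨k, by rw [mul_assoc, hk1], hk2⟩)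
  one_smul t := Quotient.inductionOn t fun p => by
    show Quotient.map _ _ ⟦p⟧ = ⟦p⟧
    simp
  mul_smul g h t := Quotient.inductionOn t fun p => by
    show Quotient.map _ _ ⟦p⟧ = Quotient.map _ _ (Quotient.map _ _ ⟦p⟧)
    simp [mul_assoc]

/-- A `G`-indexing system: for each subgroup `H ≤ G` a class of finite `H`-sets
containing all trivial sets and closed under isomorphism, restriction,
conjugation, subobjects, finite coproducts, and self-induction. -/
structure IndexingSystem (G : Type) [Group G] [Finite G] where
  mem : ∀ (H : Subgroup G) (X : Type), Finite X → MulAction H X → Prop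
  mem_trivial : ∀ (H : Subgroup G) (X : Type) (fX : Finite X),
    mem H X fX (trivialSMul H X)
  mem_iso : ∀ (H : Subgroup G) (X Y : Type) (fX : Finite X) (fY : Finite Y)
    (aX : MulAction H X) (aY : MulAction H Y) (e : X ≃ Y),
    IsEquivariant aX aY e → mem H X fX aX → mem H Y fY aY
  mem_res : ∀ (K H : Subgroup G) (hKH : K ≤ H) (X : Type) (fX : Finite X)
    (aX : MulAction H X), mem H X fX aX →
    mem K X fX (resAction (Subgroup.inclusion hKH) X aX)
  mem_conj : ∀ (H : Subgroup G) (g : G) (X : Type) (fX : Finite X)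
    (aX : MulAction H X), mem H X fX aX →
    mem (conjS g H) X fX
      (resAction ((Subgroup.equivSMul (MulAut.conj g) H).symm.toMonoidHom) X aX)
  mem_sub : ∀ (H : Subgroup G) (X Y : Type) (fX : Finite X) (fY : Finite Y)
    (aX : MulAction H X) (aY : MulAction H Y) (f : X → Y),
    Function.Injective f → IsEquivariant aX aY f →
    mem H Y fY aY → mem H X fX aX
  mem_sum : ∀ (H : Subgroup G) (X Y : Type) (fX : Finite X) (fY : Finite Y)
    (aX : MulAction H X) (aY : MulAction H Y),
    mem H X fX aX → mem H Y fY aY →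
    mem H (X ⊕ Y) inferInstance (sumAction aX aY)
  mem_selfind : ∀ (K H : Subgroup G) (hKH : K ≤ H) (X : Type) (fX : Finite X)
    (aX : MulAction K X),
    mem K X fX aX →
    mem H (H ⧸ K.subgroupOf H) inferInstance inferInstance →
    mem H (IndType H (K.subgroupOf H) X
        (resAction (Subgroup.subgroupOfEquivOfLe hKH).toMonoidHom X aX))
      inferInstance
      (indAction H (K.subgroupOf H) X
        (resAction (Subgroup.subgroupOfEquivOfLe hKH).toMonoidHom X aX))

/-- The graph of an indexing system: `K →_I H` iff `K ≤ H` and the orbit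
`H/K` is admissible for `I`. -/
def IndexingSystem.grel {G : Type} [Group G] [Finite G] (I : IndexingSystem G)
    (K H : Subgroup G) : Prop :=
  K ≤ H ∧ I.mem H (H ⧸ K.subgroupOf H) inferInstance inferInstance

/-!
Reflexivity holds because `H/H` is a trivial `H`-set. For transitivity `J → K → H`,
self-induction puts `ind_K^H (K/J)` into `I(H)`, and `hJ ↦ [h, J]` identifies `H/J` with the
orbit of `[1, J]` in it, so `H/J ∈ I(H)` by closure under subobjects.
-/

namespace IndexingSystem

variable {G : Type} [Group G] [Finite G]

theorem mem_of_smul_eq_self (I : IndexingSystem G) {H : Subgroup G} {X : Type}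
    (fX : Finite X) (aX : MulAction H X) (htriv : ∀ (h : H) (x : X), actSMul aX h x = x) :
    I.mem H X fX aX :=
  I.mem_iso H X X fX fX (trivialSMul H X) aX (Equiv.refl X) (fun h x => (htriv h x).symm)
    (I.mem_trivial H X fX)

theorem mem_quotient_self (I : IndexingSystem G) (H : Subgroup G) :
    I.mem H (H ⧸ H.subgroupOf H) inferInstance inferInstance := by
  have : Subsingleton (H ⧸ H.subgroupOf H) := by
    rw [Subgroup.subgroupOf_self]
    exact QuotientGroup.subsingleton_quotient_top
  exact I.mem_of_smul_eq_self _ _ fun _ _ => Subsingleton.elim _ _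

end IndexingSystem

section QuotientToInd

variable {G : Type} [Group G] {J K H : Subgroup G}

abbrev quotientSubgroupOfAction (J : Subgroup G) (hKH : K ≤ H) :
    MulAction (K.subgroupOf H) (K ⧸ J.subgroupOf K) :=
  resAction (Subgroup.subgroupOfEquivOfLe hKH).toMonoidHom _ inferInstance

theorem smul_mk_one_eq_mk_one_iff (hKH : K ≤ H) (k : K.subgroupOf H) :
    actSMul (quotientSubgroupOfAction J hKH) k (QuotientGroup.mk 1) = QuotientGroup.mk 1 ↔
      ((k : H) : G) ∈ J := by
  show (QuotientGroup.mk (Subgroup.subgroupOfEquivOfLe hKH k * 1) : K ⧸ J.subgroupOf K) = _ ↔ _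
  rw [QuotientGroup.eq]
  simp [Subgroup.mem_subgroupOf, Subgroup.subgroupOfEquivOfLe]

theorem ind_mk_mk_one_eq_iff (hJK : J ≤ K) (hKH : K ≤ H) (g h : H) :
    (⟦(g, QuotientGroup.mk 1)⟧ :
        IndType H (K.subgroupOf H) _ (quotientSubgroupOfAction J hKH)) =
      ⟦(h, QuotientGroup.mk 1)⟧ ↔ g⁻¹ * h ∈ J.subgroupOf H := by
  constructor
  · intro hgh
    obtain ⟨k, hk, hkJ⟩ := Quotient.exact hgh
    rw [← show g * k = h from hk, inv_mul_cancel_left, Subgroup.mem_subgroupOf]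
    exact (smul_mk_one_eq_mk_one_iff hKH k).mp hkJ
  · intro hJ
    refine Quotient.sound ⟨⟨g⁻¹ * h, hJK hJ⟩, mul_inv_cancel_left g h, ?_⟩
    exact (smul_mk_one_eq_mk_one_iff hKH _).mpr hJ

variable (hJK : J ≤ K) (hKH : K ≤ H)

def quotientToInd : H ⧸ J.subgroupOf H →
    IndType H (K.subgroupOf H) _ (quotientSubgroupOfAction J hKH) :=
  Quotient.lift (fun h => ⟦(h, QuotientGroup.mk 1)⟧) fun g h hgh =>
    (ind_mk_mk_one_eq_iff hJK hKH g h).mpr (QuotientGroup.leftRel_apply.mp hgh)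

theorem quotientToInd_injective : Function.Injective (quotientToInd hJK hKH) := by
  rintro ⟨g⟩ ⟨h⟩ hgh
  exact Quotient.sound (QuotientGroup.leftRel_apply.mpr
    ((ind_mk_mk_one_eq_iff hJK hKH g h).mp hgh))

theorem quotientToInd_isEquivariant :
    IsEquivariant inferInstance (indAction H (K.subgroupOf H) _ _) (quotientToInd hJK hKH) := by
  rintro h ⟨g⟩
  rfl

end QuotientToInd

theorem IndexingSystem.mem_quotient_trans {G : Type} [Group G] [Finite G] (I : IndexingSystem G)
    {J K H : Subgroup G} (hJK : J ≤ K) (hKH : K ≤ H)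
    (hJ : I.mem K (K ⧸ J.subgroupOf K) inferInstance inferInstance)
    (hK : I.mem H (H ⧸ K.subgroupOf H) inferInstance inferInstance) :
    I.mem H (H ⧸ J.subgroupOf H) inferInstance inferInstance :=
  I.mem_sub H _ _ inferInstance inferInstance inferInstance _ (quotientToInd hJK hKH)
    (quotientToInd_injective hJK hKH) (quotientToInd_isEquivariant hJK hKH)
    (I.mem_selfind K H hKH _ inferInstance inferInstance hJ hK)

/-- If `I` is a `G`-indexing system then the relation
`K →_I H` (i.e. `K ≤ H` and `H/K ∈ I(H)`) is a partial order on the subgroups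
of `G` refining the subset relation: it is reflexive, antisymmetric,
transitive, and `K →_I H` implies `K ≤ H`. -/
theorem stmt0 {G : Type} [Group G] [Finite G] (I : IndexingSystem G) :
    (∀ H : Subgroup G, I.grel H H) ∧
    (∀ K H : Subgroup G, I.grel K H → I.grel H K → K = H) ∧
    (∀ J K H : Subgroup G, I.grel J K → I.grel K H → I.grel J H) ∧
    (∀ K H : Subgroup G, I.grel K H → K ≤ H) :=
  ⟨fun H => ⟨le_rfl, I.mem_quotient_self H⟩,
    fun _ _ hKH hHK => le_antisymm hKH.1 hHK.1,
    fun _ _ _ hJK hKH => ⟨hJK.1.trans hKH.1, I.mem_quotient_trans hJK.1 hKH.1 hJK.2 hKH.2⟩,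
    fun _ _ h => h.1⟩
end

section
/- Given a G-transfer system →, define I_→(H) to be the class of finite H-sets isomorphic to finite disjoint unions of orbits H/K with K → H. Then I_→ is a G-indexing system, and it is the unique indexing system whose associated graph relation equals →. -/
/-!
An `H`-set is a disjoint union of orbits `H/K` with `K → H` exactly when the stabilizer of each
of its points, viewed as a subgroup of `G`, is related to `H`. Each closure axiom of an indexing
system thereby becomes a computation of stabilizers (of a restriction, a conjugate, a summand,
or a point `[h, x]` of an induced set, whose stabilizer is `h Stab_K(x) h⁻¹`) followed by the
matching axiom of the transfer system. Conversely, in any indexing system with graph `→` an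
`H`-set is admissible iff all its orbits `H/Stab(x)` are (subobjects one way, coproducts the
other), i.e. iff `Stab(x) → H` for every `x`; so it agrees with the one built from `→`.
-/

open Pointwise

/-- A `G`-transfer system: a partial order on the subgroups of `G` refining
inclusion, closed under conjugation and restriction. -/
structure TransferSystem (G : Type) [Group G] where
  rel : Subgroup G → Subgroup G → Prop
  le_of_rel : ∀ K H : Subgroup G, rel K H → K ≤ H
  refl : ∀ H : Subgroup G, rel H H
  antisymm : ∀ K H : Subgroup G, rel K H → rel H K → K = H
  trans : ∀ J K H : Subgroup G, rel J K → rel K H → rel J H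
  conj : ∀ (K H : Subgroup G) (g : G), rel K H → rel (conjS g K) (conjS g H)
  res : ∀ K H L : Subgroup G, rel K H → L ≤ H → rel (K ⊓ L) L

/-- The componentwise action on a disjoint union (sigma type) of actions. -/
def sigmaAction {H : Type} [Group H] {ι : Type} {f : ι → Type}
    (a : ∀ i, MulAction H (f i)) : MulAction H (Σ i, f i) where
  smul h p := ⟨p.1, actSMul (a p.1) h p.2⟩
  one_smul := by rintro ⟨i, x⟩; exact congrArg (Sigma.mk i) ((a i).one_smul x)
  mul_smul := by rintro g h ⟨i, x⟩; exact congrArg (Sigma.mk i) ((a i).mul_smul g h x)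

/-- `OrbitCoprod T H X aX` says that the finite `H`-set `X` is isomorphic to a
finite disjoint union of orbits `H/K` with `K → H` in the transfer system
`T`. -/
def OrbitCoprod {G : Type} [Group G] [Finite G] (T : TransferSystem G)
    (H : Subgroup G) (X : Type) (aX : MulAction H X) : Prop :=
  ∃ (n : ℕ) (K : Fin n → Subgroup G), (∀ i, T.rel (K i) H) ∧
    ∃ e : X ≃ Σ i : Fin n, (H ⧸ (K i).subgroupOf H),
      IsEquivariant aX (sigmaAction fun _ => inferInstance) e

lemma IsEquivariant.symm {H X Y : Type} [Group H] {aX : MulAction H X} {aY : MulAction H Y}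
    {e : X ≃ Y} (he : IsEquivariant aX aY e) : IsEquivariant aY aX e.symm := fun h y =>
  e.injective <| by rw [he, e.apply_symm_apply, e.apply_symm_apply]

section Stabilizer

variable {G : Type} [Group G]

lemma mem_conjS {g x : G} {P : Subgroup G} : x ∈ conjS g P ↔ g⁻¹ * x * g ∈ P := by
  rw [conjS, Subgroup.mem_pointwise_smul_iff_inv_smul_mem, MulAut.smul_def,
    MulAut.conj_inv_apply]

def stabilizerG (H : Subgroup G) {X : Type} (aX : MulAction H X) (x : X) : Subgroup G :=
  (letI := aX; MulAction.stabilizer H x).map H.subtype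

variable {H : Subgroup G} {X Y : Type} {aX : MulAction H X} {aY : MulAction H Y}

lemma mem_stabilizerG {x : X} {g : G} :
    g ∈ stabilizerG H aX x ↔ ∃ hg : g ∈ H, actSMul aX ⟨g, hg⟩ x = x := by
  simp only [stabilizerG, Subgroup.mem_map, Subgroup.coe_subtype]
  exact ⟨fun ⟨⟨g, hg⟩, hs, hgg⟩ => hgg ▸ ⟨hg, hs⟩, fun ⟨hg, hs⟩ => ⟨⟨g, hg⟩, hs, rfl⟩⟩

lemma stabilizerG_le (aX : MulAction H X) (x : X) : stabilizerG H aX x ≤ H :=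
  Subgroup.map_subtype_le _

lemma subgroupOf_stabilizerG (aX : MulAction H X) (x : X) :
    (stabilizerG H aX x).subgroupOf H = (letI := aX; MulAction.stabilizer H x) :=
  Subgroup.comap_map_eq_self_of_injective H.subtype_injective _

lemma stabilizerG_of_injective {f : X → Y} (hf : Function.Injective f)
    (he : IsEquivariant aX aY f) (x : X) : stabilizerG H aY (f x) = stabilizerG H aX x := by
  unfold IsEquivariant at he
  ext g
  simp only [mem_stabilizerG, ← he, hf.eq_iff]

lemma stabilizerG_sigmaAction_mk {ι : Type} {f : ι → Type} (a : ∀ i, MulAction H (f i))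
    (i : ι) (x : f i) : stabilizerG H (sigmaAction a) ⟨i, x⟩ = stabilizerG H (a i) x :=
  stabilizerG_of_injective sigma_mk_injective (fun _ _ => rfl) x

lemma stabilizerG_smul (h : H) (x : X) :
    stabilizerG H aX (actSMul aX h x) = conjS (h : G) (stabilizerG H aX x) := by
  let _ := aX
  rw [stabilizerG, stabilizerG, actSMul, MulAction.stabilizer_smul_eq_stabilizer_map_conj,
    Subgroup.map_map]
  change _ = Subgroup.map (MulAut.conj (h : G)).toMonoidHom _
  rw [Subgroup.map_map]
  rfl

lemma stabilizerG_quotient_mk {K : Subgroup G} (hKH : K ≤ H) (h : H) :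
    stabilizerG H inferInstance (h : H ⧸ K.subgroupOf H) = conjS (h : G) K := by
  have hmk : (h : H ⧸ K.subgroupOf H) =
      actSMul inferInstance h ((1 : H) : H ⧸ K.subgroupOf H) := by
    rw [actSMul, MulAction.Quotient.smul_mk, smul_eq_mul, mul_one]
  rw [hmk, stabilizerG_smul, stabilizerG, MulAction.stabilizer_quotient,
    Subgroup.subgroupOf_map_subtype, inf_of_le_left hKH]

lemma stabilizerG_quotient_one {K : Subgroup G} (hKH : K ≤ H) :
    stabilizerG H inferInstance ((1 : H) : H ⧸ K.subgroupOf H) = K := by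
  simpa [conjS] using stabilizerG_quotient_mk hKH 1

lemma stabilizerG_resAction_inclusion {K : Subgroup G} (hKH : K ≤ H) (x : X) :
    stabilizerG K (resAction (Subgroup.inclusion hKH) X aX) x = stabilizerG H aX x ⊓ K := by
  ext g
  simp only [mem_stabilizerG, Subgroup.mem_inf]
  exact ⟨fun ⟨hg, hs⟩ => ⟨⟨hKH hg, hs⟩, hg⟩, fun ⟨⟨_, hs⟩, hg⟩ => ⟨hg, hs⟩⟩

lemma stabilizerG_resAction_conj (g : G) (x : X) :
    stabilizerG (conjS g H)
        (resAction (Subgroup.equivSMul (MulAut.conj g) H).symm.toMonoidHom X aX) x =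
      conjS g (stabilizerG H aX x) := by
  ext y
  rw [mem_conjS, mem_stabilizerG]
  erw [mem_stabilizerG]
  have hconj (hy : y ∈ conjS g H) (hg : g⁻¹ * y * g ∈ H) :
      (Subgroup.equivSMul (MulAut.conj g) H).symm ⟨y, hy⟩ = ⟨g⁻¹ * y * g, hg⟩ := by
    rw [MulEquiv.symm_apply_eq]
    ext
    change y = MulAut.conj g (g⁻¹ * y * g)
    simp [mul_assoc]
  refine ⟨fun ⟨hy, hs⟩ => ⟨mem_conjS.mp hy, ?_⟩, fun ⟨hg, hs⟩ => ⟨mem_conjS.mpr hg, ?_⟩⟩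
  · rwa [← hconj hy]
  · rwa [← hconj _ hg] at hs

lemma stabilizerG_indAction_mk_one {K : Subgroup G} (hKH : K ≤ H) (aX : MulAction K X)
    (x : X) :
    stabilizerG H (indAction H (K.subgroupOf H) X
        (resAction (Subgroup.subgroupOfEquivOfLe hKH).toMonoidHom X aX))
      (Quotient.mk _ (1, x)) = stabilizerG K aX x := by
  set a' := resAction (Subgroup.subgroupOfEquivOfLe hKH).toMonoidHom X aX
  ext g
  erw [mem_stabilizerG, mem_stabilizerG]
  change (∃ hg : g ∈ H, Quotient.mk (indSetoid H (K.subgroupOf H) X a')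
    ((⟨g, hg⟩ : H) * 1, x) = Quotient.mk _ (1, x)) ↔ _
  simp only [mul_one, eq_comm (b := Quotient.mk _ ((1 : H), x)), Quotient.eq]
  change (∃ hg : g ∈ H, ∃ k : K.subgroupOf H, 1 * (k : H) = ⟨g, hg⟩ ∧ actSMul a' k x = x) ↔ _
  constructor
  · rintro ⟨_, k, hk, hs⟩
    obtain rfl : ((k : H) : G) = g := by simpa using congrArg Subtype.val hk
    exact ⟨k.2, hs⟩
  · rintro ⟨hg, hs⟩
    exact ⟨hKH hg, ⟨⟨g, hKH hg⟩, hg⟩, one_mul _, hs⟩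

lemma stabilizerG_indAction_mk {K : Subgroup G} (hKH : K ≤ H) (aX : MulAction K X) (h : H)
    (x : X) :
    stabilizerG H (indAction H (K.subgroupOf H) X
        (resAction (Subgroup.subgroupOfEquivOfLe hKH).toMonoidHom X aX))
      (Quotient.mk _ (h, x)) = conjS (h : G) (stabilizerG K aX x) := by
  set a' := resAction (Subgroup.subgroupOfEquivOfLe hKH).toMonoidHom X aX
  have hmk : Quotient.mk (indSetoid H (K.subgroupOf H) X a') (h, x) =
      actSMul (indAction H _ X a') h
        (Quotient.mk _ (1, x) : IndType H (K.subgroupOf H) X a') := by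
    change _ = Quotient.mk _ (h * 1, x)
    rw [mul_one]
  rw [hmk]
  exact (stabilizerG_smul h _).trans (congrArg _ (stabilizerG_indAction_mk_one hKH aX x))

end Stabilizer

lemma exists_equivariant_equiv_sigma_quotient {G : Type} [Group G] {H : Subgroup G}
    {X : Type} [Finite X] (aX : MulAction H X) :
    ∃ (n : ℕ) (x : Fin n → X)
      (e : X ≃ Σ i : Fin n, H ⧸ (stabilizerG H aX (x i)).subgroupOf H),
      IsEquivariant aX (sigmaAction fun _ => inferInstance) e := by
  let _ := aX
  have : Finite (MulAction.orbitRel.Quotient H X) := Quotient.finite _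
  obtain ⟨n, ⟨q⟩⟩ := Finite.exists_equiv_fin (MulAction.orbitRel.Quotient H X)
  let x i := (q.symm i).out
  let e : X ≃ Σ i : Fin n, H ⧸ (stabilizerG H aX (x i)).subgroupOf H :=
    (MulAction.selfEquivSigmaOrbitsQuotientStabilizer H X).trans <|
      (Equiv.sigmaCongrLeft' q).trans <| Equiv.sigmaCongrRight fun i =>
        Subgroup.quotientEquivOfEq (subgroupOf_stabilizerG aX (x i)).symm
  have he : IsEquivariant (sigmaAction fun _ => inferInstance) aX e.symm := by
    rintro h ⟨i, p⟩
    induction p using QuotientGroup.induction_on with | H h' => ?_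
    change (h * h') • x i = h • h' • x i
    rw [mul_smul]
  exact ⟨n, x, e, he.symm⟩

namespace TransferSystem

variable {G : Type} [Group G] (T : TransferSystem G)

lemma rel_conjS_of_mem {K H : Subgroup G} {h : G} (hKH : T.rel K H) (hh : h ∈ H) :
    T.rel (conjS h K) H := by
  simpa only [conjS, Subgroup.conj_smul_eq_self_of_mem hh] using T.conj K H h hKH

lemma rel_stabilizerG_quotient {K H : Subgroup G} (hKH : T.rel K H) (q : H ⧸ K.subgroupOf H) :
    T.rel (stabilizerG H inferInstance q) H := by
  induction q using QuotientGroup.induction_on with | H h => ?_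
  rw [stabilizerG_quotient_mk (T.le_of_rel _ _ hKH)]
  exact T.rel_conjS_of_mem hKH h.2

lemma orbitCoprod_iff [Finite G] {H : Subgroup G} {X : Type} [Finite X] (aX : MulAction H X) :
    OrbitCoprod T H X aX ↔ ∀ x, T.rel (stabilizerG H aX x) H := by
  constructor
  · rintro ⟨n, K, hK, e, he⟩ x
    rw [← stabilizerG_of_injective e.injective he]
    obtain ⟨i, q⟩ := e x
    rw [stabilizerG_sigmaAction_mk]
    exact T.rel_stabilizerG_quotient (hK i) q
  · intro hstab
    obtain ⟨n, x, e, he⟩ := exists_equivariant_equiv_sigma_quotient aX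
    exact ⟨n, _, fun i => hstab (x i), e, he⟩

def toIndexingSystem [Finite G] : IndexingSystem G where
  mem H X _ aX := ∀ x, T.rel (stabilizerG H aX x) H
  mem_trivial H X _ x := by
    convert T.refl H
    ext g
    exact ⟨fun hg => stabilizerG_le _ x hg, fun hg => mem_stabilizerG.mpr ⟨hg, rfl⟩⟩
  mem_iso H X Y _ _ aX aY e he hX y := by
    rw [← e.apply_symm_apply y, stabilizerG_of_injective e.injective he]
    exact hX _
  mem_res K H hKH X _ aX hX x := by
    rw [stabilizerG_resAction_inclusion]
    exact T.res _ _ _ (hX x) hKH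
  mem_conj H g X _ aX hX x := by
    rw [stabilizerG_resAction_conj]
    exact T.conj _ _ g (hX x)
  mem_sub H X Y _ _ aX aY f hf he hY x := by
    rw [← stabilizerG_of_injective hf he]
    exact hY (f x)
  mem_sum H X Y _ _ aX aY hX hY := by
    rintro (x | y)
    · rw [stabilizerG_of_injective Sum.inl_injective (fun _ _ => rfl)]
      exact hX x
    · rw [stabilizerG_of_injective Sum.inr_injective (fun _ _ => rfl)]
      exact hY y
  mem_selfind K H hKH X _ aX hX hQ := by
    have hrel : T.rel K H := by
      simpa only [stabilizerG_quotient_one hKH] using hQ ((1 : H) : H ⧸ K.subgroupOf H)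
    rintro ⟨h, x⟩
    exact (congrArg (T.rel · H) (stabilizerG_indAction_mk hKH aX h x)).mpr
      (T.rel_conjS_of_mem (T.trans _ _ _ (hX x) hrel) h.2)

lemma grel_toIndexingSystem [Finite G] (K H : Subgroup G) :
    T.toIndexingSystem.grel K H ↔ T.rel K H := by
  constructor
  · rintro ⟨hKH, hQ⟩
    simpa only [stabilizerG_quotient_one hKH] using hQ ((1 : H) : H ⧸ K.subgroupOf H)
  · exact fun hKH => ⟨T.le_of_rel _ _ hKH, T.rel_stabilizerG_quotient hKH⟩

end TransferSystem

def Fin.sigmaSuccEquiv {n : ℕ} (f : Fin (n + 1) → Type) :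
    (f 0 ⊕ Σ i : Fin n, f i.succ) ≃ Σ i : Fin (n + 1), f i where
  toFun
    | .inl x => ⟨0, x⟩
    | .inr ⟨i, x⟩ => ⟨i.succ, x⟩
  invFun p := Fin.cases (motive := fun j => f j → f 0 ⊕ Σ i : Fin n, f i.succ)
    Sum.inl (fun j x => Sum.inr ⟨j, x⟩) p.1 p.2
  left_inv := by rintro (x | ⟨i, x⟩) <;> simp
  right_inv := by
    rintro ⟨i, x⟩
    induction i using Fin.cases <;> simp

namespace IndexingSystem

variable {G : Type} [Group G] [Finite G]

lemma ext {I J : IndexingSystem G}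
    (h : ∀ H X fX aX, I.mem H X fX aX ↔ J.mem H X fX aX) : I = J := by
  obtain ⟨memI⟩ := I
  obtain ⟨memJ⟩ := J
  obtain rfl : memI = memJ := by
    ext H X fX aX
    exact h H X fX aX
  rfl

variable (J : IndexingSystem G) (H : Subgroup G)

lemma mem_sigma {n : ℕ} {f : Fin n → Type} [∀ i, Finite (f i)] (a : ∀ i, MulAction H (f i))
    (ha : ∀ i, J.mem H (f i) inferInstance (a i)) :
    J.mem H (Σ i, f i) inferInstance (sigmaAction a) := by
  induction n with
  | zero =>
    exact J.mem_iso H _ _ inferInstance _ (trivialSMul H _) _ (Equiv.refl _)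
      (fun _ p => p.1.elim0) (J.mem_trivial H _ inferInstance)
  | succ n ih =>
    exact J.mem_iso H _ _ _ _ _ _ (Fin.sigmaSuccEquiv f) (by rintro _ (x | ⟨i, x⟩) <;> rfl)
      (J.mem_sum H _ _ _ _ _ _ (ha 0) (ih (fun i => a i.succ) fun i => ha i.succ))

variable {H}

lemma grel_stabilizerG_of_mem {X : Type} {fX : Finite X} {aX : MulAction H X}
    (hX : J.mem H X fX aX) (x : X) : J.grel (stabilizerG H aX x) H := by
  let _ := aX
  refine ⟨stabilizerG_le aX x, J.mem_sub H _ _ _ _ _ _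
    (MulAction.ofQuotientStabilizer H x ∘ Subgroup.quotientEquivOfEq (subgroupOf_stabilizerG aX x))
    ((MulAction.injective_ofQuotientStabilizer H x).comp (Equiv.injective _)) ?_ hX⟩
  intro h q
  induction q using QuotientGroup.induction_on with | H h' => ?_
  exact mul_smul h h' x

lemma mem_iff_forall_rel_stabilizerG (T : TransferSystem G)
    (hJ : ∀ K H : Subgroup G, J.grel K H ↔ T.rel K H) {X : Type} (fX : Finite X)
    (aX : MulAction H X) : J.mem H X fX aX ↔ ∀ x, T.rel (stabilizerG H aX x) H := by
  refine ⟨fun hX x => (hJ _ _).mp (J.grel_stabilizerG_of_mem hX x), fun hstab => ?_⟩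
  obtain ⟨n, x, e, he⟩ := exists_equivariant_equiv_sigma_quotient aX
  exact J.mem_iso H _ _ _ _ _ _ e.symm he.symm
    (J.mem_sigma H _ fun i => ((hJ _ _).mpr (hstab (x i))).2)

end IndexingSystem

/-- Given a `G`-transfer system `→`, the assignment
`I_→(H) :=` {finite `H`-sets isomorphic to finite disjoint unions of orbits
`H/K` with `K → H`} is a `G`-indexing system, and it is the unique indexing
system whose graph relation equals `→`. -/
theorem stmt3 {G : Type} [Group G] [Finite G] (T : TransferSystem G) :
    ∃ I : IndexingSystem G,
      (∀ (H : Subgroup G) (X : Type) (fX : Finite X) (aX : MulAction H X),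
        I.mem H X fX aX ↔ OrbitCoprod T H X aX) ∧
      (∀ K H : Subgroup G, I.grel K H ↔ T.rel K H) ∧
      (∀ J : IndexingSystem G, (∀ K H : Subgroup G, J.grel K H ↔ T.rel K H) →
        J = I) :=
  ⟨T.toIndexingSystem, fun _ _ _ aX => (T.orbitCoprod_iff aX).symm, T.grel_toIndexingSystem,
    fun J hJ => IndexingSystem.ext fun _ _ fX aX => J.mem_iff_forall_rel_stabilizerG T hJ fX aX⟩
end

section
/- Let R be a binary relation on the subgroups of a finite group G that refines inclusion. Define R₁ as the closure of R under conjugation, R₂ as the closure of R₁ under restriction (adding (L ∩ K, L) for all L ⊆ H whenever (K,H) ∈ R₁), and R₃ as the reflexive–transitive closure of R₂. Then R₃ is the smallest G-transfer system containing R. -/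
/-!
Each of the three closure steps only adds pairs that any transfer system containing `R` must
already contain, so minimality is immediate. Conversely, the restriction closure of a
conjugation-closed relation is still conjugation-closed (conjugation is a lattice automorphism
of `Sub(G)`), and both closure properties survive the reflexive–transitive closure: a chain
`K → M → H` restricts to `L ≤ H` as `K ⊓ L → M ⊓ L → L`. Antisymmetry comes for free
because every generating pair refines inclusion.
-/

open Pointwise

/-- Closure of a relation on subgroups under conjugation. -/
def conjClosure {G : Type} [Group G] (R : Subgroup G → Subgroup G → Prop) :
    Subgroup G → Subgroup G → Prop :=
  fun K' H' => ∃ (K H : Subgroup G) (g : G), R K H ∧ K' = conjS g K ∧ H' = conjS g H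

/-- Closure of a relation on subgroups under restriction: we add the pair
`(L ⊓ K, L)` for every `L ≤ H` whenever `(K, H)` is related. -/
def resClosure {G : Type} [Group G] (R : Subgroup G → Subgroup G → Prop) :
    Subgroup G → Subgroup G → Prop :=
  fun K' H' => ∃ K H : Subgroup G, R K H ∧ H' ≤ H ∧ K' = H' ⊓ K

lemma Relation.ReflTransGen.le_of_le {α : Type*} [Preorder α] {r : α → α → Prop}
    (hr : ∀ a b, r a b → a ≤ b) {a b : α} (h : Relation.ReflTransGen r a b) : a ≤ b := by
  induction h with
  | refl => exact le_rfl
  | tail _ hbc ih => exact ih.trans (hr _ _ hbc)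

section conjS

variable {G : Type} [Group G]

lemma conjS_mono (g : G) {A B : Subgroup G} (h : A ≤ B) : conjS g A ≤ conjS g B :=
  Subgroup.pointwise_smul_le_pointwise_smul_iff.2 h

lemma conjS_inf (g : G) (A B : Subgroup G) : conjS g (A ⊓ B) = conjS g A ⊓ conjS g B :=
  Subgroup.smul_inf _ A B

lemma conjS_conjS (g h : G) (A : Subgroup G) : conjS g (conjS h A) = conjS (g * h) A := by
  simp [conjS, smul_smul, map_mul]

lemma conjS_one (A : Subgroup G) : conjS 1 A = A := by
  simp [conjS]

end conjS

section closures

variable {G : Type} [Group G] {r : Subgroup G → Subgroup G → Prop} {K H : Subgroup G}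

lemma conjClosure_conj (g : G) (h : conjClosure r K H) :
    conjClosure r (conjS g K) (conjS g H) := by
  obtain ⟨K₀, H₀, g₀, hr, rfl, rfl⟩ := h
  exact ⟨K₀, H₀, g * g₀, hr, conjS_conjS .., conjS_conjS ..⟩

lemma conjClosure_of_rel (h : r K H) : conjClosure r K H :=
  ⟨K, H, 1, h, (conjS_one K).symm, (conjS_one H).symm⟩

lemma le_of_resClosure (h : resClosure r K H) : K ≤ H := by
  obtain ⟨K₀, H₀, -, -, rfl⟩ := h
  exact inf_le_left

lemma resClosure_of_rel (hle : K ≤ H) (h : r K H) : resClosure r K H :=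
  ⟨K, H, h, le_rfl, (inf_of_le_right hle).symm⟩

lemma resClosure_conj (hconj : ∀ K H (g : G), r K H → r (conjS g K) (conjS g H)) (g : G)
    (h : resClosure r K H) : resClosure r (conjS g K) (conjS g H) := by
  obtain ⟨K₀, H₀, hr, hle, rfl⟩ := h
  exact ⟨conjS g K₀, conjS g H₀, hconj _ _ g hr, conjS_mono g hle, conjS_inf g H K₀⟩

lemma resClosure_res {L : Subgroup G} (h : resClosure r K H) (hL : L ≤ H) :
    resClosure r (K ⊓ L) L := by
  obtain ⟨K₀, H₀, hr, hle, rfl⟩ := h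
  refine ⟨K₀, H₀, hr, hL.trans hle, ?_⟩
  rw [inf_comm (H ⊓ K₀) L, ← inf_assoc, inf_of_le_left hL]

lemma reflTransGen_conj (hconj : ∀ K H (g : G), r K H → r (conjS g K) (conjS g H)) (g : G)
    (h : Relation.ReflTransGen r K H) : Relation.ReflTransGen r (conjS g K) (conjS g H) :=
  Relation.ReflTransGen.lift (conjS g) (fun _ _ => hconj _ _ g) _ _ h

lemma reflTransGen_res (hle : ∀ K H, r K H → K ≤ H)
    (hres : ∀ K H L, r K H → L ≤ H → r (K ⊓ L) L) (h : Relation.ReflTransGen r K H) :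
    ∀ L, L ≤ H → Relation.ReflTransGen r (K ⊓ L) L := by
  induction h with
  | refl => intro L hL; rw [inf_of_le_right hL]
  | @tail M H hKM hMH ih =>
      intro L hL
      have hinf : K ⊓ (M ⊓ L) = K ⊓ L := by
        rw [← inf_assoc, inf_of_le_left (hKM.le_of_le hle)]
      exact hinf ▸ (ih (M ⊓ L) inf_le_left).tail (hres _ _ _ hMH hL)

end closures

namespace TransferSystem

variable {G : Type} [Group G]

/-- The relation `R₃` of the statement, as a transfer system. -/
def generatedBy (R : Subgroup G → Subgroup G → Prop) : TransferSystem G where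
  rel := Relation.ReflTransGen (resClosure (conjClosure R))
  le_of_rel _ _ h := h.le_of_le fun _ _ => le_of_resClosure
  refl _ := .refl
  antisymm _ _ h h' :=
    le_antisymm (h.le_of_le fun _ _ => le_of_resClosure) (h'.le_of_le fun _ _ => le_of_resClosure)
  trans _ _ _ h h' := h.trans h'
  conj _ _ g :=
    reflTransGen_conj (fun _ _ g => resClosure_conj (fun _ _ g => conjClosure_conj g) g) g
  res _ _ L h hL :=
    reflTransGen_res (fun _ _ => le_of_resClosure) (fun _ _ _ => resClosure_res) h L hL

variable {R : Subgroup G → Subgroup G → Prop} {K H : Subgroup G}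

lemma generatedBy_rel : (generatedBy R).rel = Relation.ReflTransGen (resClosure (conjClosure R)) :=
  rfl

lemma generatedBy_rel_of_rel (hR : ∀ K H, R K H → K ≤ H) (h : R K H) :
    (generatedBy R).rel K H :=
  Relation.ReflTransGen.single (resClosure_of_rel (hR K H h) (conjClosure_of_rel h))

lemma rel_of_resClosure_conjClosure (S : TransferSystem G) (hS : ∀ K H, R K H → S.rel K H)
    (h : resClosure (conjClosure R) K H) : S.rel K H := by
  obtain ⟨-, -, ⟨K₀, H₀, g, hr, rfl, rfl⟩, hle, rfl⟩ := h
  simpa only [inf_comm] using S.res _ _ _ (S.conj _ _ g (hS _ _ hr)) hle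

lemma rel_of_generatedBy (S : TransferSystem G) (hS : ∀ K H, R K H → S.rel K H)
    (h : (generatedBy R).rel K H) : S.rel K H := by
  rw [generatedBy_rel] at h
  induction h with
  | refl => exact S.refl _
  | tail _ hs ih => exact S.trans _ _ _ ih (S.rel_of_resClosure_conjClosure hS hs)

end TransferSystem

theorem stmt6_general {G : Type} [Group G]
    (R : Subgroup G → Subgroup G → Prop) (hR : ∀ K H, R K H → K ≤ H) :
    ∃ T : TransferSystem G,
      (∀ K H, T.rel K H ↔ Relation.ReflTransGen (resClosure (conjClosure R)) K H) ∧
      (∀ K H, R K H → T.rel K H) ∧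
      (∀ S : TransferSystem G, (∀ K H, R K H → S.rel K H) →
        ∀ K H, T.rel K H → S.rel K H) :=
  ⟨.generatedBy R, fun _ _ => by rw [TransferSystem.generatedBy_rel],
    fun _ _ => TransferSystem.generatedBy_rel_of_rel hR,
    fun S hS _ _ => S.rel_of_generatedBy hS⟩

/-- Let `R` be a binary relation on the subgroups of a finite
group `G` refining inclusion.  Let `R₁` be the closure of `R` under
conjugation, `R₂` the closure of `R₁` under restriction, and `R₃` the
reflexive–transitive closure of `R₂`.  Then `R₃` is the smallest `G`-transfer
system containing `R`. -/
theorem stmt6 {G : Type} [Group G] [Finite G]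
    (R : Subgroup G → Subgroup G → Prop) (hR : ∀ K H, R K H → K ≤ H) :
    ∃ T : TransferSystem G,
      (∀ K H, T.rel K H ↔ Relation.ReflTransGen (resClosure (conjClosure R)) K H) ∧
      (∀ K H, R K H → T.rel K H) ∧
      (∀ S : TransferSystem G, (∀ K H, R K H → S.rel K H) →
        ∀ K H, T.rel K H → S.rel K H) :=
  stmt6_general R hR
end

section
/- Let G be a finite group, K ⊆ G a normal subgroup, and K ⊆ H₁, …, Hₙ ⊆ G subgroups such that the set {H₁, …, Hₙ} is closed under conjugation by elements of G. Then the transfer system generated by the relations (K, Hᵢ) equals {(M,M) : M ⊆ G} ∪ ⋃ᵢ {(M ∩ K, M) : M ⊆ Hᵢ}. -/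
open Pointwise

/-- The transfer system generated by a relation `R`, described as a relation:
`genRel R K H` holds iff every transfer system containing `R` relates `K` to
`H`; i.e. it is the smallest transfer system containing `R`. -/
def genRel {G : Type} [Group G] (R : Subgroup G → Subgroup G → Prop)
    (K H : Subgroup G) : Prop :=
  ∀ T : TransferSystem G, (∀ A B, R A B → T.rel A B) → T.rel K H

/-!
Each pair `(M ⊓ K, M)` with `M ≤ Hᵢ` is the restriction of the generator `(K, Hᵢ)` to `M`.
Conversely these pairs, with the diagonal, already form a transfer system: restriction and
composition stay of the same shape, and conjugation does because `K` is normal and the `Hᵢ`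
are permuted by conjugation. Hence this system is the one generated.
-/

section RestrictionTransferSystem

variable {G : Type} [Group G] (K : Subgroup G) {ι : Type} (Hs : ι → Subgroup G)

def RestrictionRel (A B : Subgroup G) : Prop :=
  A = B ∨ ∃ i, B ≤ Hs i ∧ A = B ⊓ K

variable {K Hs}

theorem restrictionRel_trans {A B C : Subgroup G} (hAB : RestrictionRel K Hs A B)
    (hBC : RestrictionRel K Hs B C) : RestrictionRel K Hs A C := by
  rcases hAB with rfl | ⟨i, hi, rfl⟩
  · exact hBC
  rcases hBC with rfl | ⟨j, hj, rfl⟩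
  · exact Or.inr ⟨i, hi, rfl⟩
  · exact Or.inr ⟨j, hj, by rw [inf_assoc, inf_idem]⟩

theorem restrictionRel_antisymm {A B : Subgroup G} (hAB : RestrictionRel K Hs A B)
    (hBA : RestrictionRel K Hs B A) : A = B := by
  rcases hAB with rfl | ⟨-, -, rfl⟩
  · rfl
  rcases hBA with h | ⟨-, -, h⟩
  · exact h.symm
  · rw [inf_assoc, inf_idem] at h
    exact h.symm

theorem restrictionRel_conjS (hK : K.Normal)
    (hconj : ∀ (g : G) (i : ι), ∃ j, conjS g (Hs i) = Hs j)
    {A B : Subgroup G} (g : G) (h : RestrictionRel K Hs A B) :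
    RestrictionRel K Hs (conjS g A) (conjS g B) := by
  rcases h with rfl | ⟨i, hi, rfl⟩
  · exact Or.inl rfl
  obtain ⟨j, hj⟩ := hconj g i
  refine Or.inr ⟨j, hj ▸ Subgroup.pointwise_smul_le_pointwise_smul_iff.2 hi, ?_⟩
  rw [conjS, conjS, Subgroup.smul_inf, @Subgroup.Normal.conj_smul_eq_self _ _ g K hK]

theorem restrictionRel_res {A B L : Subgroup G} (h : RestrictionRel K Hs A B) (hL : L ≤ B) :
    RestrictionRel K Hs (A ⊓ L) L := by
  rcases h with rfl | ⟨i, hi, rfl⟩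
  · exact Or.inl (inf_eq_right.2 hL)
  · exact Or.inr ⟨i, hL.trans hi, by rw [inf_right_comm, inf_eq_right.2 hL]⟩

def restrictionTransferSystem (hK : K.Normal)
    (hconj : ∀ (g : G) (i : ι), ∃ j, conjS g (Hs i) = Hs j) : TransferSystem G where
  rel := RestrictionRel K Hs
  le_of_rel := by
    rintro A B (rfl | ⟨i, -, rfl⟩)
    exacts [le_rfl, inf_le_left]
  refl _ := Or.inl rfl
  antisymm _ _ := restrictionRel_antisymm
  trans _ _ _ := restrictionRel_trans
  conj _ _ g := restrictionRel_conjS hK hconj g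
  res _ _ _ := restrictionRel_res

end RestrictionTransferSystem

theorem stmt9_general {G : Type} [Group G] (K : Subgroup G) (hK : K.Normal)
    (n : ℕ) (Hs : Fin n → Subgroup G) (hle : ∀ i, K ≤ Hs i)
    (hconj : ∀ (g : G) (i : Fin n), ∃ j, conjS g (Hs i) = Hs j) :
    ∀ A B : Subgroup G,
      genRel (fun A B => A = K ∧ ∃ i, B = Hs i) A B ↔
        (A = B ∨ ∃ i, B ≤ Hs i ∧ A = B ⊓ K) := by
  intro A B
  constructor
  · intro hgen
    refine hgen (restrictionTransferSystem hK hconj) ?_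
    rintro _ _ ⟨rfl, i, rfl⟩
    exact Or.inr ⟨i, le_rfl, (inf_eq_right.2 (hle i)).symm⟩
  · rintro (rfl | ⟨i, hi, rfl⟩) T hT
    · exact T.refl A
    · simpa only [inf_comm] using T.res K (Hs i) B (hT _ _ ⟨rfl, i, rfl⟩) hi

/-- Let `K ⊆ G` be normal, and `K ⊆ H₁, …, Hₙ ⊆ G` subgroups
whose set is closed under conjugation.  The transfer system generated by the
pairs `(K, Hᵢ)` is `{(M, M) : M ⊆ G} ∪ ⋃ᵢ {(M ⊓ K, M) : M ≤ Hᵢ}`. -/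
theorem stmt9 {G : Type} [Group G] [Finite G] (K : Subgroup G) (hK : K.Normal)
    (n : ℕ) (Hs : Fin n → Subgroup G) (hle : ∀ i, K ≤ Hs i)
    (hconj : ∀ (g : G) (i : Fin n), ∃ j, conjS g (Hs i) = Hs j) :
    ∀ A B : Subgroup G,
      genRel (fun A B => A = K ∧ ∃ i, B = Hs i) A B ↔
        (A = B ∨ ∃ i, B ≤ Hs i ∧ A = B ⊓ K) :=
  stmt9_general K hK n Hs hle hconj
end

section
/- Every saturated G-transfer system is generated by its irreducible relations, i.e., by the set of pairs (K,H) with K → H such that K is a maximal proper subgroup of H. -/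
open Pointwise

/-- A transfer system is saturated if `K → H` and `K ≤ L ≤ H` imply `K → L`
and `L → H`. -/
def TransferSystem.Saturated {G : Type} [Group G] (T : TransferSystem G) : Prop :=
  ∀ K L H : Subgroup G, T.rel K H → K ≤ L → L ≤ H → T.rel K L ∧ T.rel L H

/-!
By well-founded induction on `H`: if `K → H` with `K < H`, choose `L` with `K ≤ L ⋖ H`.
Saturation splits `K → H` into `K → L`, handled by induction, and the irreducible `L → H`.
-/

theorem covBy_iff_lt_and_forall_lt_le_eq {α : Type*} [PartialOrder α] {a b : α} :
    a ⋖ b ↔ a < b ∧ ∀ c, a < c → c ≤ b → c = b := by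
  refine and_congr_right fun _ => forall_congr' fun c => imp_congr_right fun _ => ?_
  exact ⟨fun hnlt hcb => hcb.lt_or_eq.resolve_left hnlt, fun hcb hlt => hlt.ne (hcb hlt.le)⟩

namespace TransferSystem

variable {G : Type} [Group G]

theorem Saturated.rel_of_rel_of_forall_covBy [Finite G] {T T' : TransferSystem G}
    (hsat : T.Saturated) (hT' : ∀ K H, T.rel K H → K ⋖ H → T'.rel K H)
    {K H : Subgroup G} (hKH : T.rel K H) : T'.rel K H := by
  induction H using WellFoundedLT.induction with
  | _ H ih =>
  rcases (T.le_of_rel K H hKH).eq_or_lt with rfl | hlt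
  · exact T'.refl K
  obtain ⟨L, hKL, hLH⟩ := exists_le_covBy_of_lt hlt
  obtain ⟨hKL', hLH'⟩ := hsat K L H hKH hKL hLH.le
  exact T'.trans K L H (ih L hLH.lt hKL') (hT' L H hLH' hLH)

end TransferSystem

/-- Every saturated `G`-transfer system is generated by its
irreducible relations, i.e. the pairs `(K, H)` with `K → H` and `K` a maximal
proper subgroup of `H`. -/
theorem stmt12 {G : Type} [Group G] [Finite G] (T : TransferSystem G)
    (hsat : T.Saturated) :
    ∀ K H : Subgroup G,
      T.rel K H ↔
        genRel (fun K H => T.rel K H ∧ K < H ∧ ∀ L : Subgroup G, K < L → L ≤ H → L = H)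
          K H := by
  intro K H
  constructor
  · intro hKH T' hT'
    exact hsat.rel_of_rel_of_forall_covBy
      (fun A B hAB hcov => hT' A B ⟨hAB, covBy_iff_lt_and_forall_lt_le_eq.1 hcov⟩) hKH
  · exact fun h => h T fun _ _ hAB => hAB.1
end

section
/- Let n be a positive integer, U = ⊕_{i ∈ I} λ_n(i)^∞ a Cₙ-universe with I ⊆ ℤ/n containing 0 and closed under negation, and let d, e be natural numbers with d ∣ e ∣ n. Then ind_{C_d}^{C_e} res^{C_n}_{C_d} U embeds C_e-equivariantly into res^{C_n}_{C_e} U if and only if the subset (I mod e) of ℤ/e satisfies (I mod e) + d = (I mod e). -/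
open Complex

/-- `zetaRoot k = exp(2πi/k)`, a primitive `k`-th root of unity. -/
noncomputable def zetaRoot (k : ℕ) : ℂ :=
  Complex.exp (2 * Real.pi * Complex.I / k)

/-- The model of the `C_n`-universe `U = ⊕_{i ∈ I} λ_n(i)^∞`: the direct sum
of countably many copies of `λ_n(i)` for each `i ∈ I`, realized on the space
of functions `(ℕ × I) → ℂ`. -/
def UnivSpace (n : ℕ) (I : Set (ZMod n)) : Type :=
  (ℕ × I) → ℂ

noncomputable instance (n : ℕ) (I : Set (ZMod n)) :
    AddCommGroup (UnivSpace n I) := Pi.addCommGroup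

noncomputable instance (n : ℕ) (I : Set (ZMod n)) :
    Module ℝ (UnivSpace n I) := Pi.module _ _ _

/-- The generator `g^{n/e}` of `C_e ⊆ C_n` acting on `res^{C_n}_{C_e} U`:
since `res^n_e λ_n(i) = λ_e(i)`, it multiplies the `(k, i)`-coordinate by
`ζ_e^i`. -/
noncomputable def resGen (n e : ℕ) (I : Set (ZMod n)) :
    UnivSpace n I →ₗ[ℝ] UnivSpace n I where
  toFun f p := zetaRoot e ^ ((p.2 : ZMod n).val) * f p
  map_add' f g := by funext p; exact mul_add _ _ _
  map_smul' c f := by funext p; exact mul_smul_comm c _ _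

/-- The generator `g^{n/e}` of `C_e` acting on the induced universe
`ind_{C_d}^{C_e} res^{C_n}_{C_d} U`, realized on `Fin (e/d) → UnivSpace n I`
(coset coordinates for `C_e/C_d`): the cyclic shift, twisted on the `0`-th
coordinate by the generator action of `C_d` on `res^{C_n}_{C_d} U`. -/
noncomputable def indResGen (n e d : ℕ) (I : Set (ZMod n)) [NeZero (e / d)] :
    (Fin (e / d) → UnivSpace n I) →ₗ[ℝ] (Fin (e / d) → UnivSpace n I) where
  toFun F a := if (a : ℕ) = 0 then resGen n d I (F (a - 1)) else F (a - 1)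
  map_add' F G := by
    funext a; by_cases h : a = 0 <;> simp [h]
  map_smul' c F := by
    funext a; by_cases h : a = 0 <;> simp [h]

/-! On restriction to `C_d` the summand `λ_n(i)` of `U` becomes `λ_d(i)`, and
`ind_{C_d}^{C_e} λ_d(i) ≅ ⊕_{a < e/d} λ_e(i + d a)`: on the `e/d` coset coordinates the
generator acts by a cyclic shift twisted by `ζ_d^i`, which the Vandermonde matrix of the
eigenvalues `ζ_e^(i + d a)` diagonalises. If `(I mod e) + d = I mod e`, every `i + d a` is
`j mod e` for some `j ∈ I`, so each summand has room in one of the infinitely many copies of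
`λ_e(j)` in `res U`, and an injective coding of the coordinates gives the embedding.

Conversely, an embedding maps the copy of `λ_e(i + d)` in `ind λ_d(i)` into some coordinate
`λ_e(j)` of `res U` by a nonzero real-linear map `ℂ → ℂ` intertwining multiplication by
`ζ_e^(i + d)` with multiplication by `ζ_e^j`. Its `ℂ`-linear or its `ℂ`-antilinear part is
nonzero, so `ζ_e^j` is `ζ_e^(i + d)` or its conjugate, i.e. `j ≡ ±(i + d) (mod e)`.
As `I = -I`, this gives `(I mod e) + d ⊆ I mod e`, an equality since `ℤ/e` is finite.
-/

open Matrix ComplexConjugate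

lemma isPrimitiveRoot_zetaRoot {e : ℕ} (he : e ≠ 0) : IsPrimitiveRoot (zetaRoot e) e :=
  Complex.isPrimitiveRoot_exp e he

lemma zetaRoot_pow_eq_pow_iff {e : ℕ} (he : e ≠ 0) {a b : ℕ} :
    zetaRoot e ^ a = zetaRoot e ^ b ↔ (a : ZMod e) = b := by
  have h := isPrimitiveRoot_zetaRoot he
  have he' := Nat.pos_of_ne_zero he
  rw [← pow_mod_orderOf _ a, ← pow_mod_orderOf _ b, ← h.eq_orderOf,
    ZMod.natCast_eq_natCast_iff']
  exact ⟨fun H => h.pow_inj (Nat.mod_lt _ he') (Nat.mod_lt _ he') H, fun H => H ▸ rfl⟩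

lemma zetaRoot_pow_of_mul_eq {d m e : ℕ} (hd : d ≠ 0) (hm : m ≠ 0) (h : d * m = e) :
    zetaRoot e ^ m = zetaRoot d := by
  rw [zetaRoot, zetaRoot, ← Complex.exp_nat_mul, ← h]
  congr 1
  push_cast
  field_simp

lemma zetaRoot_pow_add_mul_pow {d m e : ℕ} (hd : d ≠ 0) (hm : m ≠ 0) (h : d * m = e)
    (x b : ℕ) :
    (zetaRoot e ^ (x + d * b)) ^ m = zetaRoot d ^ x := by
  have hb : zetaRoot e ^ (d * b * m) = 1 :=
    (isPrimitiveRoot_zetaRoot (h ▸ mul_ne_zero hd hm)).pow_eq_one_iff_dvd _ |>.mpr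
      ⟨b, by rw [← h]; ring⟩
  rw [← pow_mul, add_mul, pow_add, hb, mul_one, mul_comm, pow_mul, zetaRoot_pow_of_mul_eq hd hm h]

theorem IsPrimitiveRoot.injective_pow_add_mul {R : Type*} [CommRing R] [IsDomain R] {ζ : R}
    {d m : ℕ} (hζ : IsPrimitiveRoot ζ (d * m)) (hd : 0 < d) (x : ℕ) :
    Function.Injective fun a : Fin m => ζ ^ (x + d * a) := by
  intro a b hab
  have hm : 0 < m := a.pos
  have hζ0 : ζ ≠ 0 := hζ.ne_zero (Nat.mul_pos hd hm).ne'
  simp only [pow_add] at hab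
  have := hζ.pow_inj (Nat.mul_lt_mul_of_pos_left a.isLt hd)
    (Nat.mul_lt_mul_of_pos_left b.isLt hd) (mul_left_cancel₀ (pow_ne_zero x hζ0) hab)
  exact Fin.ext (Nat.eq_of_mul_eq_mul_left hd this)

theorem Complex.eq_or_eq_conj_of_map_mul {ψ : ℂ →ₗ[ℝ] ℂ} (hψ : ψ ≠ 0) {w c : ℂ}
    (h : ∀ z, ψ (w * z) = c * ψ z) : c = w ∨ c = conj w := by
  set X := ψ 1
  set Y := ψ I
  have hψ_apply : ∀ z, ψ z = z.re * X + z.im * Y := fun z => by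
    calc ψ z = ψ (z.re • 1 + z.im • I) := by simp [Complex.real_smul, Complex.re_add_im]
      _ = z.re * X + z.im * Y := by
        rw [map_add, map_smul, map_smul, Complex.real_smul, Complex.real_smul]
  have hw : w = w.re + w.im * I := (Complex.re_add_im w).symm
  have hw' : conj w = w.re - w.im * I := Complex.ext (by simp) (by simp)
  have h1 := h 1
  have hI := h I
  rw [mul_one, hψ_apply] at h1
  rw [hψ_apply (w * I)] at hI
  simp only [Complex.mul_re, Complex.mul_im, Complex.I_re, Complex.I_im, mul_zero, mul_one,
    zero_sub, add_zero, Complex.ofReal_neg] at hI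
  have hminus : (c - w) * (X - I * Y) = 0 := by
    linear_combination -h1 + I * hI - (X - I * Y) * hw + w.im * Y * Complex.I_sq
  have hplus : (c - conj w) * (X + I * Y) = 0 := by
    linear_combination -h1 - I * hI - (X + I * Y) * hw' + w.im * Y * Complex.I_sq
  by_contra! hne
  have hX : X - I * Y = 0 := (mul_eq_zero.mp hminus).resolve_left (sub_ne_zero.mpr hne.1)
  have hY : X + I * Y = 0 := (mul_eq_zero.mp hplus).resolve_left (sub_ne_zero.mpr hne.2)
  refine hψ (LinearMap.ext fun z => ?_)
  rw [hψ_apply, LinearMap.zero_apply]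
  linear_combination (z.re / 2 : ℂ) * (hX + hY) + (z.im * I / 2 : ℂ) * (hX - hY)
    + (z.im * Y : ℂ) * Complex.I_sq

lemma add_nsmul_mem_of_forall_add_mem {G : Type*} [AddMonoid G] {s : Set G} {g : G}
    (h : ∀ x ∈ s, x + g ∈ s) {x : G} (hx : x ∈ s) (k : ℕ) : x + k • g ∈ s := by
  induction k with
  | zero => simpa
  | succ k ih => rw [succ_nsmul, ← add_assoc]; exact h _ ih

lemma Set.image_add_right_eq_of_forall_add_mem {G : Type*} [AddGroup G] {s : Set G}
    (hs : s.Finite) {g : G} (h : ∀ x ∈ s, x + g ∈ s) : (fun x => x + g) '' s = s :=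
  Set.eq_of_subset_of_ncard_le (Set.image_subset_iff.mpr h)
    (Set.ncard_image_of_injective _ (add_left_injective g)).ge hs

section TwistedShift

variable {R : Type*} {m : ℕ} [NeZero m]

def twistedShift [Mul R] (z : R) (f : Fin m → R) (a : Fin m) : R :=
  if (a : ℕ) = 0 then z * f (a - 1) else f (a - 1)

@[simp]
lemma twistedShift_apply_zero [Mul R] {k : ℕ} (z : R) (f : Fin (k + 1) → R) :
    twistedShift z f 0 = z * f (Fin.last k) := by
  simp [twistedShift, sub_eq_iff_eq_add.mpr (Fin.last_add_one k).symm]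

@[simp]
lemma twistedShift_apply_succ [Mul R] {k : ℕ} (z : R) (f : Fin (k + 1) → R) (b : Fin k) :
    twistedShift z f b.succ = f b.castSucc := by
  simp [twistedShift, sub_eq_iff_eq_add.mpr Fin.coeSucc_eq_succ.symm]

theorem vandermonde_mulVec_twistedShift [CommRing R] {v : Fin m → R} {z : R}
    (hv : ∀ a, v a ^ m = z) (f : Fin m → R) :
    vandermonde v *ᵥ twistedShift z f = v * (vandermonde v *ᵥ f) := by
  obtain ⟨k, rfl⟩ := Nat.exists_eq_add_one_of_ne_zero (NeZero.ne m)
  ext a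
  simp only [mulVec, dotProduct, vandermonde_apply, Pi.mul_apply]
  rw [Fin.sum_univ_succ, Fin.sum_univ_castSucc (fun i => v a ^ (i : ℕ) * f i), mul_add,
    Finset.mul_sum, ← hv a]
  simp only [twistedShift_apply_zero, twistedShift_apply_succ, Fin.val_zero, pow_zero, one_mul,
    Fin.val_succ, Fin.val_last, Fin.val_castSucc]
  rw [add_comm, pow_succ', mul_assoc]
  exact congrArg (· + _) (Finset.sum_congr rfl fun b _ => by ring)

theorem twistedShift_mul_inv_pow [Field R] {w z : R} (hw0 : w ≠ 0) (hw : w ^ m = z) (c : R) :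
    twistedShift z (fun a => c * w⁻¹ ^ (a : ℕ)) =
      fun a : Fin m => w * c * w⁻¹ ^ (a : ℕ) := by
  obtain ⟨k, rfl⟩ := Nat.exists_eq_add_one_of_ne_zero (NeZero.ne m)
  ext a
  cases a using Fin.cases with
  | zero =>
    rw [twistedShift_apply_zero, Fin.val_last, Fin.val_zero, ← hw, pow_succ', inv_pow]
    field_simp
  | succ b =>
    rw [twistedShift_apply_succ, Fin.val_succ, Fin.val_castSucc, pow_succ]
    field_simp

end TwistedShift

section Universe

variable {n : ℕ} {I : Set (ZMod n)}

lemma resGen_apply (e : ℕ) (f : UnivSpace n I) (p : ℕ × I) :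
    resGen n e I f p = zetaRoot e ^ (p.2 : ZMod n).val * f p := rfl

lemma indResGen_apply (e d : ℕ) [NeZero (e / d)] (F : Fin (e / d) → UnivSpace n I)
    (a : Fin (e / d)) (p : ℕ × I) :
    indResGen n e d I F a p =
      twistedShift (zetaRoot d ^ (p.2 : ZMod n).val) (fun b => F b p) a := by
  simp only [indResGen, twistedShift, LinearMap.coe_mk, AddHom.coe_mk]
  split_ifs <;> rfl

noncomputable def inducedEigenvector (m : ℕ) (p : ℕ × I) (w : ℂ) :
    ℂ →ₗ[ℝ] (Fin m → UnivSpace n I) where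
  toFun c a q := if q = p then c * w⁻¹ ^ (a : ℕ) else 0
  map_add' c c' := by
    funext a q
    show (if q = p then (c + c') * _ else 0) =
      (if q = p then c * _ else 0) + (if q = p then c' * _ else 0)
    split_ifs <;> ring
  map_smul' r c := by
    funext a q
    show (if q = p then (r • c) * _ else 0) = r • (if q = p then c * _ else 0)
    split_ifs <;> simp [Complex.real_smul, mul_assoc]

lemma inducedEigenvector_apply (m : ℕ) (p : ℕ × I) (w c : ℂ) (a : Fin m) (q : ℕ × I) :
    inducedEigenvector m p w c a q = if q = p then c * w⁻¹ ^ (a : ℕ) else 0 := rfl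

lemma indResGen_inducedEigenvector (e d : ℕ) [NeZero (e / d)] (p : ℕ × I) {w : ℂ}
    (hw0 : w ≠ 0) (hw : w ^ (e / d) = zetaRoot d ^ (p.2 : ZMod n).val) (c : ℂ) :
    indResGen n e d I (inducedEigenvector (e / d) p w c) =
      inducedEigenvector (e / d) p w (w * c) := by
  funext a q
  rw [indResGen_apply]
  by_cases hq : q = p
  · subst hq
    simp only [inducedEigenvector_apply, if_true]
    rw [twistedShift_mul_inv_pow hw0 hw]
  · simp [inducedEigenvector_apply, hq, twistedShift]

-- Coordinates of `F` in `ind λ_d(i) ≅ ⊕_{a < m} λ_e(i + d a)`, one block per copy `(k, i)`.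
noncomputable def inducedCoeff (e d m : ℕ) :
    (Fin m → UnivSpace n I) →ₗ[ℝ] (ℕ × I × Fin m → ℂ) where
  toFun F q := (vandermonde (fun a : Fin m => zetaRoot e ^ ((q.2.1 : ZMod n).val + d * a)) *ᵥ
    fun b => F b (q.1, q.2.1)) q.2.2
  map_add' _ _ := funext fun q => congrFun (mulVec_add _ _ _) q.2.2
  map_smul' r _ := funext fun q => congrFun (mulVec_smul _ r _) q.2.2

noncomputable def inducedEmbedding (e d : ℕ) {m : ℕ} (code : ℕ × I × Fin m → ℕ × I) :
    (Fin m → UnivSpace n I) →ₗ[ℝ] UnivSpace n I :=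
  (Function.ExtendByZero.linearMap ℂ code).restrictScalars ℝ ∘ₗ inducedCoeff e d m

lemma inducedEmbedding_apply (e d : ℕ) {m : ℕ} (code : ℕ × I × Fin m → ℕ × I)
    (F : Fin m → UnivSpace n I) :
    inducedEmbedding e d code F = Function.extend code (inducedCoeff e d m F) 0 := rfl

theorem inducedEmbedding_injective {e d m : ℕ} (he : e ≠ 0) (hd : 0 < d) (hdm : d * m = e)
    {code : ℕ × I × Fin m → ℕ × I} (hcode : Function.Injective code) :
    Function.Injective (inducedEmbedding e d code) := by
  refine (injective_iff_map_eq_zero _).mpr fun F hF => ?_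
  have hcoeff : inducedCoeff e d m F = 0 :=
    Function.extend_injective hcode 0 (by simp only [Function.extend_zero]; exact hF)
  funext b p
  have hζ : IsPrimitiveRoot (zetaRoot e) (d * m) := hdm.symm ▸ isPrimitiveRoot_zetaRoot he
  have hv := det_vandermonde_ne_zero_iff.mpr (hζ.injective_pow_add_mul hd (p.2 : ZMod n).val)
  have hFp : (fun b => F b p) = 0 :=
    eq_zero_of_mulVec_eq_zero hv (funext fun a => congrFun hcoeff (p.1, p.2, a))
  exact congrFun hFp b

theorem inducedEmbedding_indResGen {e d : ℕ} [NeZero (e / d)] (he : e ≠ 0) (hd : 0 < d)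
    (hde : d ∣ e) {code : ℕ × I × Fin (e / d) → ℕ × I} (hcode : Function.Injective code)
    (hlabel : ∀ q, (((code q).2 : ZMod n).val : ZMod e) = (q.2.1 : ZMod n).val + d * q.2.2)
    (F : Fin (e / d) → UnivSpace n I) :
    inducedEmbedding e d code (indResGen n e d I F) =
      resGen n e I (inducedEmbedding e d code F) := by
  have hdm : d * (e / d) = e := Nat.mul_div_cancel' hde
  funext p
  rw [resGen_apply, inducedEmbedding_apply, inducedEmbedding_apply]
  by_cases hp : ∃ q, code q = p
  · obtain ⟨q, rfl⟩ := hp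
    rw [hcode.extend_apply, hcode.extend_apply]
    obtain ⟨k, i, a⟩ := q
    have hv : ∀ b : Fin (e / d), (zetaRoot e ^ ((i : ZMod n).val + d * b)) ^ (e / d) =
        zetaRoot d ^ (i : ZMod n).val :=
      fun b => zetaRoot_pow_add_mul_pow hd.ne' (NeZero.ne _) hdm _ _
    have hshift : (fun b => indResGen n e d I F b (k, i)) =
        twistedShift (zetaRoot d ^ (i : ZMod n).val) fun b => F b (k, i) :=
      funext fun b => indResGen_apply e d F b (k, i)
    have hlabel' : zetaRoot e ^ ((code (k, i, a)).2 : ZMod n).val =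
        zetaRoot e ^ ((i : ZMod n).val + d * a) := by
      rw [zetaRoot_pow_eq_pow_iff he, hlabel]
      push_cast
      rfl
    simp only [inducedCoeff, LinearMap.coe_mk, AddHom.coe_mk, hshift,
      vandermonde_mulVec_twistedShift hv, Pi.mul_apply, hlabel']
  · rw [Function.extend_apply' _ _ _ hp, Function.extend_apply' _ _ _ hp, Pi.zero_apply, mul_zero]

theorem exists_embedding_of_add_mem [NeZero n] {e d : ℕ} [NeZero (e / d)] (he : e ≠ 0)
    (hd : 0 < d) (hde : d ∣ e) (hen : e ∣ n)
    (h : ∀ x ∈ ZMod.castHom hen (ZMod e) '' I, x + d ∈ ZMod.castHom hen (ZMod e) '' I) :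
    ∃ φ : (Fin (e / d) → UnivSpace n I) →ₗ[ℝ] UnivSpace n I,
      Function.Injective φ ∧ ∀ F, φ (indResGen n e d I F) = resGen n e I (φ F) := by
  have hlabel : ∀ q : ℕ × I × Fin (e / d), ∃ j : I,
      (((j : ZMod n).val : ℕ) : ZMod e) = (q.2.1 : ZMod n).val + d * q.2.2 := fun q => by
    obtain ⟨j, hj, hjq⟩ := add_nsmul_mem_of_forall_add_mem h
      (Set.mem_image_of_mem _ q.2.1.2) (q.2.2 : ℕ)
    refine ⟨⟨j, hj⟩, ?_⟩
    rw [ZMod.natCast_val, ZMod.natCast_val]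
    simpa [nsmul_eq_mul, mul_comm] using hjq
  choose J hJ using hlabel
  obtain ⟨ι, hι⟩ := exists_injective_nat (ℕ × I × Fin (e / d))
  have hcode : Function.Injective fun q => (ι q, J q) := fun q q' hq => hι (congrArg Prod.fst hq)
  exact ⟨inducedEmbedding e d fun q => (ι q, J q),
    inducedEmbedding_injective he hd (Nat.mul_div_cancel' hde) hcode,
    inducedEmbedding_indResGen he hd hde hcode hJ⟩

theorem exists_zetaRoot_pow_eq_or_eq_conj_of_embedding {e d : ℕ} [NeZero (e / d)]
    {φ : (Fin (e / d) → UnivSpace n I) →ₗ[ℝ] UnivSpace n I} (hφ : Function.Injective φ)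
    (hcomm : ∀ F, φ (indResGen n e d I F) = resGen n e I (φ F)) (p : ℕ × I) {w : ℂ}
    (hw0 : w ≠ 0) (hw : w ^ (e / d) = zetaRoot d ^ (p.2 : ZMod n).val) :
    ∃ P : ℕ × I, zetaRoot e ^ (P.2 : ZMod n).val = w ∨
      zetaRoot e ^ (P.2 : ZMod n).val = conj w := by
  set u := inducedEigenvector (e / d) p w
  obtain ⟨P, hP⟩ : ∃ P, φ (u 1) P ≠ 0 := by
    by_contra! h
    have hu : u 1 = 0 := hφ (by rw [map_zero]; exact funext h)
    have h1 := congrFun (congrFun hu 0) p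
    simp only [u, inducedEigenvector_apply, if_true, one_mul, Fin.val_zero, pow_zero] at h1
    exact one_ne_zero h1
  set ψ : ℂ →ₗ[ℝ] ℂ := LinearMap.proj P ∘ₗ φ ∘ₗ u
  have hψ : ∀ z, ψ (w * z) = zetaRoot e ^ (P.2 : ZMod n).val * ψ z := fun z => by
    show φ (u (w * z)) P = _ * φ (u z) P
    rw [← indResGen_inducedEigenvector e d p hw0 hw, hcomm, resGen_apply]
  exact ⟨P, Complex.eq_or_eq_conj_of_map_mul (fun h => hP (LinearMap.congr_fun h 1)) hψ⟩

theorem castHom_add_mem_image_of_embedding [NeZero n] {e d : ℕ} [NeZero (e / d)] (he : e ≠ 0)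
    (hd : 0 < d) (hde : d ∣ e) (hen : e ∣ n) (hneg : ∀ i ∈ I, -i ∈ I)
    {φ : (Fin (e / d) → UnivSpace n I) →ₗ[ℝ] UnivSpace n I} (hφ : Function.Injective φ)
    (hcomm : ∀ F, φ (indResGen n e d I F) = resGen n e I (φ F)) {i : ZMod n} (hi : i ∈ I) :
    ZMod.castHom hen (ZMod e) i + d ∈ ZMod.castHom hen (ZMod e) '' I := by
  have hζ := isPrimitiveRoot_zetaRoot he
  have hcast : ∀ x : ZMod n, ((x.val : ℕ) : ZMod e) = ZMod.castHom hen (ZMod e) x :=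
    fun x => ZMod.natCast_val x
  have hw : (zetaRoot e ^ (i.val + d * 1)) ^ (e / d) = zetaRoot d ^ i.val :=
    zetaRoot_pow_add_mul_pow hd.ne' (NeZero.ne _) (Nat.mul_div_cancel' hde) _ _
  obtain ⟨P, h | h⟩ := exists_zetaRoot_pow_eq_or_eq_conj_of_embedding hφ hcomm (0, ⟨i, hi⟩)
    (pow_ne_zero _ (hζ.ne_zero he)) hw
  · refine ⟨P.2, P.2.2, ?_⟩
    rw [zetaRoot_pow_eq_pow_iff he] at h
    push_cast at h
    rw [← hcast, ← hcast, h, mul_one]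
  · refine ⟨-P.2, hneg _ P.2.2, ?_⟩
    have h1 : zetaRoot e ^ ((P.2 : ZMod n).val + (i.val + d * 1)) = zetaRoot e ^ 0 := by
      rw [pow_add, h, Complex.conj_mul', norm_pow, hζ.norm'_eq_one he]
      simp
    rw [zetaRoot_pow_eq_pow_iff he] at h1
    push_cast at h1
    rw [map_neg, ← hcast, ← hcast]
    linear_combination -h1

end Universe

theorem stmt13_general (n e d : ℕ) (hn : 0 < n) (he : 0 < e) (hd : 0 < d)
    (hde : d ∣ e) (hen : e ∣ n) (I : Set (ZMod n))
    (hneg : ∀ i ∈ I, -i ∈ I) :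
    haveI : NeZero (e / d) :=
      ⟨Nat.pos_iff_ne_zero.mp (Nat.div_pos (Nat.le_of_dvd he hde) hd)⟩
    (∃ φ : (Fin (e / d) → UnivSpace n I) →ₗ[ℝ] UnivSpace n I,
        Function.Injective φ ∧
        ∀ F, φ (indResGen n e d I F) = resGen n e I (φ F)) ↔
      (fun x => x + (d : ZMod e)) '' ((ZMod.castHom hen (ZMod e)) '' I) =
        (ZMod.castHom hen (ZMod e)) '' I := by
  have : NeZero n := ⟨hn.ne'⟩
  have : NeZero e := ⟨he.ne'⟩
  have : NeZero (e / d) := ⟨(Nat.div_pos (Nat.le_of_dvd he hde) hd).ne'⟩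
  constructor
  · rintro ⟨φ, hφ, hcomm⟩
    refine Set.image_add_right_eq_of_forall_add_mem (Set.toFinite _) ?_
    rintro _ ⟨i, hi, rfl⟩
    exact castHom_add_mem_image_of_embedding he.ne' hd hde hen hneg hφ hcomm hi
  · intro h
    exact exists_embedding_of_add_mem he.ne' hd hde hen fun x hx => h ▸ ⟨x, hx, rfl⟩

/-- Let `U = ⊕_{i ∈ I} λ_n(i)^∞` be a `C_n`-universe, where
`I ⊆ ℤ/n` contains `0` and is closed under negation, and let `d ∣ e ∣ n`.
Then `ind_{C_d}^{C_e} res^{C_n}_{C_d} U` embeds `C_e`-equivariantly into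
`res^{C_n}_{C_e} U` (i.e. there is an injective `ℝ`-linear map intertwining
the generator actions) if and only if `(I mod e) + d = (I mod e)` in `ℤ/e`. -/
theorem stmt13 (n e d : ℕ) (hn : 0 < n) (he : 0 < e) (hd : 0 < d)
    (hde : d ∣ e) (hen : e ∣ n) (I : Set (ZMod n))
    (h0 : (0 : ZMod n) ∈ I) (hneg : ∀ i ∈ I, -i ∈ I) :
    haveI : NeZero (e / d) :=
      ⟨Nat.pos_iff_ne_zero.mp (Nat.div_pos (Nat.le_of_dvd he hde) hd)⟩
    (∃ φ : (Fin (e / d) → UnivSpace n I) →ₗ[ℝ] UnivSpace n I,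
        Function.Injective φ ∧
        ∀ F, φ (indResGen n e d I F) = resGen n e I (φ F)) ↔
      (fun x => x + (d : ZMod e)) '' ((ZMod.castHom hen (ZMod e)) '' I) =
        (ZMod.castHom hen (ZMod e)) '' I :=
  stmt13_general n e d hn he hd hde hen I hneg
end

section
/- Let p be a prime and n > 0. For each saturated C_{p^n}-transfer system → with irreducible generating relations (C_{p^{k_i}}, C_{p^{k_i+1}}) for 0 ≤ k₁ < ⋯ < kₘ < n, let I = {±(a₁ p^{k₁} + ⋯ + aₘ p^{kₘ}) mod pⁿ : 0 ≤ a₁, …, aₘ < p} ⊆ ℤ/pⁿ. Then for all 0 ≤ j < n: p^j belongs to (I mod p^{j+1}) if and only if j ∈ {k₁, …, kₘ}, and moreover (I mod p^{k_i+1}) + p^{k_i} = (I mod p^{k_i+1}) for each i. -/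
/-- The target set in `ZMod q`. -/
def Jset (p q : ℕ) {m : ℕ} (k : Fin m → ℕ) : Set (ZMod q) :=
  {x | ∃ a : Fin m → ℕ, (∀ i, a i < p) ∧
    (x = ∑ i, (a i : ZMod q) * (p : ZMod q) ^ (k i) ∨
     x = -∑ i, (a i : ZMod q) * (p : ZMod q) ^ (k i))}

lemma cast_sum_aux {R S : Type*} [CommRing R] [CommRing S] (φ : R →+* S)
    {m : ℕ} (a : Fin m → ℕ) (k : Fin m → ℕ) (p : ℕ) :
    φ (∑ i, (a i : R) * (p : R) ^ (k i)) = ∑ i, (a i : S) * (p : S) ^ (k i) := by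
  rw [map_sum]
  simp [map_mul, map_pow, map_natCast]

lemma geom_aux (q j : ℕ) : (∑ t ∈ Finset.range j, q * (q + 1) ^ t) + 1 ≤ (q + 1) ^ j := by
  induction j with
  | zero => simp
  | succ j ih =>
    rw [Finset.sum_range_succ, pow_succ]
    nlinarith [ih]

lemma sum_bound (p j : ℕ) (hp : 1 ≤ p) {m : ℕ} (k : Fin m → ℕ) (hinj : Function.Injective k)
    (a : Fin m → ℕ) (ha : ∀ i, a i < p) (T : Finset (Fin m)) (hT : ∀ i ∈ T, k i < j) :
    (∑ i ∈ T, a i * p ^ (k i)) < p ^ j := by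
  obtain ⟨q, rfl⟩ : ∃ q, p = q + 1 := ⟨p - 1, by omega⟩
  have h1 : ∑ i ∈ T, a i * (q + 1) ^ (k i) ≤ ∑ i ∈ T, q * (q + 1) ^ (k i) := by
    apply Finset.sum_le_sum
    intro i _
    have := ha i
    exact Nat.mul_le_mul_right _ (by omega)
  have h2 : ∑ i ∈ T, q * (q + 1) ^ (k i) = ∑ t ∈ T.image k, q * (q + 1) ^ t := by
    rw [Finset.sum_image (fun x _ y _ h => hinj h)]
  have h3 : T.image k ⊆ Finset.range j := by
    intro t ht
    simp only [Finset.mem_image] at ht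
    obtain ⟨i, hi, rfl⟩ := ht
    exact Finset.mem_range.mpr (hT i hi)
  have h4 : ∑ t ∈ T.image k, q * (q + 1) ^ t ≤ ∑ t ∈ Finset.range j, q * (q + 1) ^ t :=
    Finset.sum_le_sum_of_subset h3
  have h5 := geom_aux q j
  omega

lemma pow_cast_zero (p c t : ℕ) (ht : c + 1 ≤ t) : (p : ZMod (p ^ (c + 1))) ^ t = 0 := by
  have h : ((p ^ t : ℕ) : ZMod (p ^ (c + 1))) = 0 :=
    (ZMod.natCast_eq_zero_iff _ _).mpr (pow_dvd_pow p ht)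
  push_cast at h
  exact h

lemma image_eq (p n j : ℕ) (hj : j < n) {m : ℕ} (k : Fin m → ℕ)
    (I : Set (ZMod (p ^ n))) (hI : I = Jset p (p ^ n) k) :
    (ZMod.castHom (pow_dvd_pow p hj) (ZMod (p ^ (j + 1)))) '' I = Jset p (p ^ (j + 1)) k := by
  subst hI
  ext x
  constructor
  · rintro ⟨y, ⟨a, ha, hy⟩, rfl⟩
    refine ⟨a, ha, ?_⟩
    rcases hy with rfl | rfl
    · left; exact cast_sum_aux _ a k p
    · right; rw [map_neg, cast_sum_aux]
  · rintro ⟨a, ha, hx⟩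
    rcases hx with rfl | rfl
    · exact ⟨∑ i, (a i : ZMod (p ^ n)) * (p : ZMod (p ^ n)) ^ (k i), ⟨a, ha, Or.inl rfl⟩,
        cast_sum_aux _ a k p⟩
    · exact ⟨-∑ i, (a i : ZMod (p ^ n)) * (p : ZMod (p ^ n)) ^ (k i), ⟨a, ha, Or.inr rfl⟩,
        by rw [map_neg, cast_sum_aux]⟩

lemma part1 (p : ℕ) (hp : p.Prime) (j : ℕ) {m : ℕ} (k : Fin m → ℕ)
    (hinj : Function.Injective k) :
    ((p : ZMod (p ^ (j + 1))) ^ j ∈ Jset p (p ^ (j + 1)) k ↔ ∃ i, k i = j) := by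
  constructor
  · rintro ⟨a, ha, hx⟩
    by_contra hne
    push_neg at hne
    set T := Finset.univ.filter (fun i : Fin m => k i ≤ j) with hTdef
    set S := ∑ i ∈ T, a i * p ^ (k i) with hSdef
    have hsplit : ∑ i, (a i : ZMod (p ^ (j + 1))) * (p : ZMod (p ^ (j + 1))) ^ (k i)
        = ((S : ℕ) : ZMod (p ^ (j + 1))) := by
      rw [← Finset.sum_filter_add_sum_filter_not Finset.univ (fun i => k i ≤ j)]
      have h2 : ∑ i ∈ Finset.univ.filter (fun i : Fin m => ¬ k i ≤ j),
          (a i : ZMod (p ^ (j + 1))) * (p : ZMod (p ^ (j + 1))) ^ (k i) = 0 := by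
        apply Finset.sum_eq_zero
        intro i hi
        simp only [Finset.mem_filter] at hi
        rw [pow_cast_zero p j (k i) (by omega), mul_zero]
      rw [h2, add_zero, hSdef]
      push_cast
      rfl
    have hbound : S < p ^ j := by
      apply sum_bound p j hp.one_le k hinj a ha T
      intro i hi
      simp only [hTdef, Finset.mem_filter] at hi
      have := hne i
      omega
    have hpj : (p : ZMod (p ^ (j + 1))) ^ j = ((p ^ j : ℕ) : ZMod (p ^ (j + 1))) := by push_cast; rfl
    have hlt : p ^ j < p ^ (j + 1) := Nat.pow_lt_pow_succ hp.one_lt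
    rw [hsplit, hpj] at hx
    rcases hx with hx | hx
    · have hmo := (ZMod.natCast_eq_natCast_iff _ _ _).mp hx
      unfold Nat.ModEq at hmo
      rw [Nat.mod_eq_of_lt hlt, Nat.mod_eq_of_lt (lt_trans hbound hlt)] at hmo
      omega
    · have hdvd : p ^ (j + 1) ∣ p ^ j + S := by
        rw [← ZMod.natCast_eq_zero_iff]
        push_cast
        rw [← Nat.cast_pow, hx]
        ring
      have hpos : 0 < p ^ j + S := by
        have := Nat.one_le_pow j p hp.pos
        omega
      have hle := Nat.le_of_dvd hpos hdvd
      have h2 : p ^ j + p ^ j ≤ p ^ (j + 1) := by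
        rw [pow_succ]
        nlinarith [hp.two_le, Nat.one_le_pow j p hp.pos]
      omega
  · rintro ⟨i, rfl⟩
    refine ⟨fun r => if r = i then 1 else 0, fun r => by dsimp; split <;> [exact hp.one_lt; exact hp.pos], Or.inl ?_⟩
    rw [Finset.sum_eq_single i]
    · simp
    · intro r _ hr
      simp [hr]
    · intro h
      exact absurd (Finset.mem_univ i) h

lemma sum_update_eq (p : ℕ) (hp : p.Prime) {m : ℕ} (k : Fin m → ℕ) (i : Fin m)
    (a : Fin m → ℕ) (d : ℕ) :
    ∑ r, ((Function.update a i ((a i + d) % p)) r : ZMod (p ^ (k i + 1)))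
        * (p : ZMod (p ^ (k i + 1))) ^ (k r)
      = ∑ r, (a r : ZMod (p ^ (k i + 1))) * (p : ZMod (p ^ (k i + 1))) ^ (k r)
        + (d : ZMod (p ^ (k i + 1))) * (p : ZMod (p ^ (k i + 1))) ^ (k i) := by
  set M := p ^ (k i + 1) with hM
  have hmod : ∀ b : ℕ, ((b % p : ℕ) : ZMod M) * (p : ZMod M) ^ (k i)
      = (b : ZMod M) * (p : ZMod M) ^ (k i) := by
    intro b
    have hme : (b % p) * p ^ (k i) ≡ b * p ^ (k i) [MOD p * p ^ (k i)] :=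
      (Nat.mod_modEq b p).mul_right' (p ^ (k i))
    rw [← pow_succ'] at hme
    have := (ZMod.natCast_eq_natCast_iff _ _ _).mpr hme
    push_cast at this
    exact this
  have hfun : (fun r => ((Function.update a i ((a i + d) % p)) r : ZMod M)
      * (p : ZMod M) ^ (k r))
      = Function.update (fun r => (a r : ZMod M) * (p : ZMod M) ^ (k r)) i
        ((((a i + d) % p : ℕ) : ZMod M) * (p : ZMod M) ^ (k i)) := by
    ext r
    rcases eq_or_ne r i with rfl | h
    · simp
    · simp [Function.update_of_ne h]
  calc ∑ r, ((Function.update a i ((a i + d) % p)) r : ZMod M) * (p : ZMod M) ^ (k r)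
      = (((a i + d) % p : ℕ) : ZMod M) * (p : ZMod M) ^ (k i)
        + ∑ r ∈ Finset.univ \ {i}, (a r : ZMod M) * (p : ZMod M) ^ (k r) := by
        rw [hfun, Finset.sum_update_of_mem (Finset.mem_univ i)]
    _ = (a i : ZMod M) * (p : ZMod M) ^ (k i) + (d : ZMod M) * (p : ZMod M) ^ (k i)
        + ∑ r ∈ Finset.univ \ {i}, (a r : ZMod M) * (p : ZMod M) ^ (k r) := by
        rw [hmod]
        push_cast
        ring
    _ = _ := by
        rw [Finset.sum_eq_sum_sdiff_singleton_add (Finset.mem_univ i)]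
        ring

lemma part2 (p : ℕ) (hp : p.Prime) {m : ℕ} (k : Fin m → ℕ) (i : Fin m) :
    (fun x => x + (p : ZMod (p ^ (k i + 1))) ^ (k i)) '' Jset p (p ^ (k i + 1)) k
      = Jset p (p ^ (k i + 1)) k := by
  set M := p ^ (k i + 1) with hM
  haveI : NeZero M := ⟨pow_ne_zero _ hp.pos.ne'⟩
  have h0 : (p : ZMod M) ^ (k i + 1) = 0 := pow_cast_zero p (k i) (k i + 1) le_rfl
  have hstep : ∀ x ∈ Jset p M k, x + (p : ZMod M) ^ (k i) ∈ Jset p M k := by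
    rintro x ⟨a, ha, hx⟩
    rcases hx with rfl | rfl
    · refine ⟨Function.update a i ((a i + 1) % p), ?_, Or.inl ?_⟩
      · intro r
        rcases eq_or_ne r i with rfl | h
        · simpa using Nat.mod_lt _ hp.pos
        · simpa [Function.update_of_ne h] using ha r
      · rw [sum_update_eq p hp k i a 1]
        push_cast
        ring
    · refine ⟨Function.update a i ((a i + (p - 1)) % p), ?_, Or.inr ?_⟩
      · intro r
        rcases eq_or_ne r i with rfl | h
        · simpa using Nat.mod_lt _ hp.pos
        · simpa [Function.update_of_ne h] using ha r
      · rw [sum_update_eq p hp k i a (p - 1)]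
        have hcast : ((p - 1 : ℕ) : ZMod M) = (p : ZMod M) - 1 := by
          push_cast [Nat.cast_sub hp.one_le]
          ring
        rw [hcast]
        have : ((p : ZMod M) - 1) * (p : ZMod M) ^ (k i) = -(p : ZMod M) ^ (k i) := by
          have hps : (p : ZMod M) * (p : ZMod M) ^ (k i) = 0 := by
            rw [← pow_succ']
            exact h0
          rw [sub_mul, one_mul, hps, zero_sub]
        rw [this]
        ring
  have hsub : (fun x => x + (p : ZMod M) ^ (k i)) '' Jset p M k ⊆ Jset p M k := by
    rintro _ ⟨x, hx, rfl⟩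
    exact hstep x hx
  have hfin : (Jset p M k).Finite := Set.toFinite _
  have hinj2 : Function.Injective (fun x : ZMod M => x + (p : ZMod M) ^ (k i)) :=
    add_left_injective _
  exact Set.eq_of_subset_of_ncard_le hsub
    (le_of_eq (Set.ncard_image_of_injective _ hinj2).symm) hfin



/-- Let `p` be a prime, `n > 0`, and `0 ≤ k₁ < ⋯ < kₘ < n`
(the levels of the irreducible generating relations `(C_{p^{kᵢ}}, C_{p^{kᵢ+1}})`
of a saturated `C_{pⁿ}`-transfer system).  Let
`I = {±(a₁ p^{k₁} + ⋯ + aₘ p^{kₘ}) : 0 ≤ aᵢ < p} ⊆ ℤ/pⁿ`.  Then for all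
`j < n`, `p^j ∈ (I mod p^{j+1})` iff `j ∈ {k₁, …, kₘ}`, and moreover
`(I mod p^{kᵢ+1}) + p^{kᵢ} = (I mod p^{kᵢ+1})` for each `i`. -/
theorem stmt15 (p : ℕ) (hp : p.Prime) (n : ℕ) (hn : 0 < n)
    (m : ℕ) (k : Fin m → ℕ) (hmono : StrictMono k) (hk : ∀ i, k i < n)
    (I : Set (ZMod (p ^ n)))
    (hI : I = {x : ZMod (p ^ n) | ∃ a : Fin m → ℕ, (∀ i, a i < p) ∧
      (x = ∑ i, (a i : ZMod (p ^ n)) * (p : ZMod (p ^ n)) ^ (k i) ∨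
       x = -∑ i, (a i : ZMod (p ^ n)) * (p : ZMod (p ^ n)) ^ (k i))}) :
    (∀ j : ℕ, (hj : j < n) →
      ((p : ZMod (p ^ (j + 1))) ^ j ∈
          (ZMod.castHom (pow_dvd_pow p hj) (ZMod (p ^ (j + 1)))) '' I ↔
        ∃ i, k i = j)) ∧
    (∀ i : Fin m,
      (fun x => x + (p : ZMod (p ^ (k i + 1))) ^ (k i)) ''
          ((ZMod.castHom (pow_dvd_pow p (hk i)) (ZMod (p ^ (k i + 1)))) '' I) =
        (ZMod.castHom (pow_dvd_pow p (hk i)) (ZMod (p ^ (k i + 1)))) '' I) := by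
  have hI' : I = Jset p (p ^ n) k := hI
  constructor
  · intro j hj
    rw [image_eq p n j hj k I hI']
    exact part1 p hp j k hmono.injective
  · intro i
    rw [image_eq p n (k i) (hk i) k I hI']
    exact part2 p hp k i
end

section
/- Let p < q be primes with p ∈ {2, 3}, and let I ⊆ ℤ/pq contain 0 and be closed under negation. If (I mod q) = ℤ/q (equivalently I surjects onto ℤ/q) but (I mod p) ≠ ℤ/p, then I = p·(ℤ/pq), and consequently I + p = I. -/
/-- Let `p < q` be primes with `p ∈ {2, 3}` and let
`I ⊆ ℤ/pq` contain `0` and be closed under negation.  If `I` surjects onto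
`ℤ/q` but not onto `ℤ/p`, then `I = p·(ℤ/pq)`, and consequently `I + p = I`. -/
theorem stmt16 (p q : ℕ) (hp : p.Prime) (hq : q.Prime) (hpq : p < q)
    (hp3 : p = 2 ∨ p = 3) (I : Set (ZMod (p * q)))
    (h0 : (0 : ZMod (p * q)) ∈ I) (hneg : ∀ i ∈ I, -i ∈ I)
    (hmodq : (ZMod.castHom (dvd_mul_left q p) (ZMod q)) '' I = Set.univ)
    (hmodp : (ZMod.castHom (dvd_mul_right p q) (ZMod p)) '' I ≠ Set.univ) :
    I = {x : ZMod (p * q) | ∃ y : ZMod (p * q), x = (p : ZMod (p * q)) * y} ∧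
      (fun x => x + (p : ZMod (p * q))) '' I = I := by
  haveI : NeZero (p * q) := ⟨Nat.mul_ne_zero hp.ne_zero hq.ne_zero⟩
  set φp := ZMod.castHom (dvd_mul_right p q) (ZMod p) with hφp
  set φq := ZMod.castHom (dvd_mul_left q p) (ZMod q) with hφq
  -- characterization of multiples of p
  have hzerop : ∀ x : ZMod (p * q), φp x = 0 ↔ ∃ y : ZMod (p * q), x = (p : ZMod (p * q)) * y := by
    intro x
    constructor
    · intro hx
      rw [hφp, ZMod.castHom_apply, ← ZMod.natCast_val, ZMod.natCast_eq_zero_iff] at hx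
      obtain ⟨k, hk⟩ := hx
      refine ⟨(k : ZMod (p * q)), ?_⟩
      have : ((x.val : ℕ) : ZMod (p * q)) = x := by
        rw [ZMod.natCast_val, ZMod.cast_id]
      rw [← this, hk]
      push_cast
      ring
    · rintro ⟨y, rfl⟩
      rw [map_mul, map_natCast, ZMod.natCast_self, zero_mul]
  -- injectivity on kernel
  have hinj : ∀ x : ZMod (p * q), φq x = 0 → φp x = 0 → x = 0 := by
    intro x hxq hxp
    rw [hφq, ZMod.castHom_apply, ← ZMod.natCast_val, ZMod.natCast_eq_zero_iff] at hxq
    rw [hφp, ZMod.castHom_apply, ← ZMod.natCast_val, ZMod.natCast_eq_zero_iff] at hxp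
    have hcop : Nat.Coprime p q := (Nat.coprime_primes hp hq).mpr (ne_of_lt hpq)
    have hdvd : p * q ∣ x.val := Nat.Coprime.mul_dvd_of_dvd_of_dvd hcop hxp hxq
    exact (ZMod.val_eq_zero x).mp (Nat.eq_zero_of_dvd_of_lt hdvd (ZMod.val_lt x))
  -- I maps to 0 mod p
  have hIp : ∀ i ∈ I, φp i = 0 := by
    by_contra h
    push_neg at h
    obtain ⟨i, hiI, hi0⟩ := h
    apply hmodp
    have key : ∀ (a z : ZMod p), a ≠ 0 → z = 0 ∨ z = a ∨ z = -a := by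
      rcases hp3 with rfl | rfl <;> decide
    apply Set.eq_univ_of_forall
    intro z
    rcases key (φp i) z hi0 with rfl | rfl | rfl
    · exact ⟨0, h0, map_zero _⟩
    · exact ⟨i, hiI, rfl⟩
    · exact ⟨-i, hneg i hiI, map_neg _ _⟩
  have hIM : I ⊆ {x : ZMod (p * q) | ∃ y, x = (p : ZMod (p * q)) * y} := by
    intro i hi
    exact (hzerop i).mp (hIp i hi)
  have hMI : {x : ZMod (p * q) | ∃ y, x = (p : ZMod (p * q)) * y} ⊆ I := by
    intro m hm
    have : φq m ∈ φq '' I := by rw [hmodq]; trivial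
    obtain ⟨i, hiI, hieq⟩ := this
    have h1 : φq (i - m) = 0 := by rw [map_sub, hieq, sub_self]
    have h2 : φp (i - m) = 0 := by
      rw [map_sub, hIp i hiI, (hzerop m).mpr hm, sub_self]
    have him : i = m := sub_eq_zero.mp (hinj _ h1 h2)
    rwa [← him]
  have hIeq : I = {x : ZMod (p * q) | ∃ y, x = (p : ZMod (p * q)) * y} :=
    Set.Subset.antisymm hIM hMI
  refine ⟨hIeq, ?_⟩
  rw [hIeq]
  ext x
  constructor
  · rintro ⟨w, ⟨y, rfl⟩, rfl⟩
    exact ⟨y + 1, by ring⟩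
  · rintro ⟨y, rfl⟩
    exact ⟨(p : ZMod (p * q)) * (y - 1), ⟨y - 1, rfl⟩, by ring⟩
end

section
/- Let p and q be primes with 3 < p < q, and let I = {0, 1} ∪ {p, 2p, …, p(q−1)} ∪ {pq − 1} ⊆ ℤ/pq. Then: (a) I + 1 ≠ I and I + p ≠ I and I + q ≠ I in ℤ/pq; (b) (I mod p) = {0, 1, p−1} satisfies (I mod p) + 1 ≠ (I mod p); (c) (I mod q) = ℤ/q. -/
/-- For primes `3 < p < q`, the set
`I = {0, 1} ∪ {p, 2p, …, p(q−1)} ∪ {pq − 1} ⊆ ℤ/pq` satisfies: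
(a) `I` is not invariant under translation by `1`, by `p`, or by `q`;
(b) `I mod p = {0, 1, −1}` and it is not invariant under translation by `1`;
(c) `I mod q = ℤ/q`. -/
theorem stmt17 (p q : ℕ) (hp : p.Prime) (hq : q.Prime) (h3p : 3 < p)
    (hpq : p < q)
    (I : Set (ZMod (p * q)))
    (hI : I = {x : ZMod (p * q) | x = 0 ∨ x = 1 ∨ x = -1 ∨
      ∃ a : ℕ, a < q ∧ x = (p : ZMod (p * q)) * (a : ZMod (p * q))}) :
    ((fun x => x + 1) '' I ≠ I ∧
      (fun x => x + (p : ZMod (p * q))) '' I ≠ I ∧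
      (fun x => x + (q : ZMod (p * q))) '' I ≠ I) ∧
    ((ZMod.castHom (dvd_mul_right p q) (ZMod p)) '' I =
        ({0, 1, -1} : Set (ZMod p)) ∧
      (fun x => x + 1) '' ((ZMod.castHom (dvd_mul_right p q) (ZMod p)) '' I) ≠
        (ZMod.castHom (dvd_mul_right p q) (ZMod p)) '' I) ∧
    (ZMod.castHom (dvd_mul_left q p) (ZMod q)) '' I = Set.univ := by
  have hp5 : 5 ≤ p := by
    have h4 : p ≠ 4 := by rintro rfl; norm_num at hp
    omega
  have hq7 : 7 ≤ q := by
    have h6 : q ≠ 6 := by rintro rfl; norm_num at hq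
    omega
  have hn1 : p * 7 ≤ p * q := Nat.mul_le_mul_left p hq7
  have hn2 : 5 * q ≤ p * q := Nat.mul_le_mul_right q hp5
  have hn35 : 35 ≤ p * q := by omega
  -- generic injectivity of nat casts below the modulus
  have key : ∀ (n a b : ℕ), a < n → b < n → ((a : ZMod n) = (b : ZMod n)) → a = b := by
    intro n a b ha hb h
    haveI : NeZero n := ⟨by omega⟩
    have h1 := ZMod.val_cast_of_lt ha
    have h2 := ZMod.val_cast_of_lt hb
    rw [← h1, ← h2, h]
  have negone : ∀ n : ℕ, 1 ≤ n → ((n - 1 : ℕ) : ZMod n) = -1 := by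
    intro n hn
    have h0 : ((n : ℕ) : ZMod n) = 0 := ZMod.natCast_self n
    rw [Nat.cast_sub hn, h0]
    ring
  -- membership criterion for natural numbers
  have hnotin : ∀ x : ℕ, x < p * q → x ≠ 0 → x ≠ 1 → x ≠ p * q - 1 → ¬ p ∣ x →
      (x : ZMod (p * q)) ∉ I := by
    intro x hx h0 h1 hm hd hmem
    rw [hI] at hmem
    rcases hmem with h | h | h | ⟨a, ha, h⟩
    · exact h0 (key (p * q) x 0 hx (by omega) (by simpa using h))
    · exact h1 (key (p * q) x 1 hx (by omega) (by simpa using h))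
    · rw [← negone (p * q) (by omega)] at h
      exact hm (key (p * q) x (p * q - 1) hx (by omega) h)
    · have hcast : (x : ZMod (p * q)) = ((p * a : ℕ) : ZMod (p * q)) := by
        push_cast; exact h
      have hpa : p * a < p * q := mul_lt_mul_of_pos_left ha (by omega : 0 < p)
      have := key (p * q) x (p * a) hx hpa hcast
      exact hd ⟨a, this⟩
  have h0I : (0 : ZMod (p * q)) ∈ I := by rw [hI]; exact Or.inl rfl
  have h1I : (1 : ZMod (p * q)) ∈ I := by rw [hI]; exact Or.inr (Or.inl rfl)
  have hneg1I : (-1 : ZMod (p * q)) ∈ I := by rw [hI]; exact Or.inr (Or.inr (Or.inl rfl))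
  refine ⟨⟨?_, ?_, ?_⟩, ⟨?_, ?_⟩, ?_⟩
  · -- I + 1 ≠ I
    intro h
    have h2 : (2 : ZMod (p * q)) ∈ I := by
      rw [← h]
      exact ⟨1, h1I, by norm_num⟩
    have : ((2 : ℕ) : ZMod (p * q)) ∉ I := by
      refine hnotin 2 (by omega) (by omega) (by omega) (by omega) ?_
      intro hd
      exact absurd (Nat.le_of_dvd (by omega) hd) (by omega)
    exact this (by exact_mod_cast h2)
  · -- I + p ≠ I
    intro h
    have h2 : ((p + 1 : ℕ) : ZMod (p * q)) ∈ I := by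
      rw [← h]
      exact ⟨1, h1I, by push_cast; ring⟩
    have : ((p + 1 : ℕ) : ZMod (p * q)) ∉ I := by
      refine hnotin (p + 1) (by omega) (by omega) (by omega) (by omega) ?_
      intro hd
      have h1 : p ∣ 1 := (Nat.dvd_add_right (dvd_refl p)).mp hd
      have := Nat.le_of_dvd one_pos h1
      omega
    exact this h2
  · -- I + q ≠ I
    intro h
    have h2 : ((q : ℕ) : ZMod (p * q)) ∈ I := by
      rw [← h]
      exact ⟨0, h0I, by push_cast; ring⟩
    have : ((q : ℕ) : ZMod (p * q)) ∉ I := by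
      refine hnotin q (by omega) (by omega) (by omega) (by omega) ?_
      intro hd
      exact absurd ((Nat.prime_dvd_prime_iff_eq hp hq).mp hd) (by omega)
    exact this h2
  · -- image mod p = {0, 1, -1}
    ext y
    constructor
    · rintro ⟨x, hx, rfl⟩
      rw [hI] at hx
      rcases hx with rfl | rfl | rfl | ⟨a, _, rfl⟩
      · left; simp
      · right; left; exact map_one _
      · right; right; rw [map_neg, map_one]; rfl
      · left
        simp [map_mul, map_natCast, ZMod.natCast_self]
    · rintro (rfl | rfl | rfl)
      · exact ⟨0, h0I, map_zero _⟩
      · exact ⟨1, h1I, map_one _⟩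
      · exact ⟨-1, hneg1I, by rw [map_neg, map_one]⟩
  · -- translation by 1 mod p
    intro h
    have himg : (ZMod.castHom (dvd_mul_right p q) (ZMod p)) '' I =
        ({0, 1, -1} : Set (ZMod p)) := by
      ext y
      constructor
      · rintro ⟨x, hx, rfl⟩
        rw [hI] at hx
        rcases hx with rfl | rfl | rfl | ⟨a, _, rfl⟩
        · left; simp
        · right; left; exact map_one _
        · right; right; rw [map_neg, map_one]; rfl
        · left
          simp [map_mul, map_natCast, ZMod.natCast_self]
      · rintro (rfl | rfl | rfl)
        · exact ⟨0, h0I, map_zero _⟩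
        · exact ⟨1, h1I, map_one _⟩
        · exact ⟨-1, hneg1I, by rw [map_neg, map_one]⟩
    rw [himg] at h
    have h2 : (2 : ZMod p) ∈ ({0, 1, -1} : Set (ZMod p)) := by
      rw [← h]
      exact ⟨1, by simp, by norm_num⟩
    rcases h2 with h2 | h2 | h2
    · have : (p : ℕ) ∣ 2 := by
        haveI : NeZero p := ⟨by omega⟩
        exact (ZMod.natCast_eq_zero_iff 2 p).mp (by exact_mod_cast h2)
      exact absurd (Nat.le_of_dvd (by omega) this) (by omega)
    · have : (2 : ℕ) = 1 := key p 2 1 (by omega) (by omega) (by exact_mod_cast h2)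
      omega
    · rw [← negone p (by omega)] at h2
      have : (2 : ℕ) = p - 1 := key p 2 (p - 1) (by omega) (by omega) (by exact_mod_cast h2)
      omega
  · -- image mod q = univ
    haveI : Fact q.Prime := ⟨hq⟩
    haveI : NeZero q := ⟨by omega⟩
    ext y
    simp only [Set.mem_univ, iff_true, Set.mem_image]
    have hpq0 : (p : ZMod q) ≠ 0 := by
      intro h
      have : (q : ℕ) ∣ p := (ZMod.natCast_eq_zero_iff p q).mp h
      exact absurd (Nat.le_of_dvd (by omega) this) (by omega)
    set a : ZMod q := (p : ZMod q)⁻¹ * y with ha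
    refine ⟨(p : ZMod (p * q)) * ((a.val : ℕ) : ZMod (p * q)), ?_, ?_⟩
    · rw [hI]
      exact Or.inr (Or.inr (Or.inr ⟨a.val, a.val_lt, rfl⟩))
    · have hval : ((a.val : ℕ) : ZMod q) = a := by simp [ZMod.natCast_val, ZMod.cast_id]
      rw [map_mul, map_natCast, map_natCast, hval, ha, ← mul_assoc,
        mul_inv_cancel₀ hpq0, one_mul]
end
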